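/- arXiv:1302.6933 — 8 statements merged into one kernel-verified Lean document; each statement's English description precedes it below -/
import Mathlib

section
/- Let X be a δ-hyperbolic length space and Y an α-quasi-convex subset. Let p and p' be respectively η- and η'-projections of points x and x' on Y. Then d(p,p') ≤ max{ d(x,x') − d(x,p) − d(x',p') + 2ε, ε } where ε = 2α + η + η' + δ. -/
open Metric Set

/-- The Gromov product of `x` and `y` seen from `z`. -/
noncomputable def gp {X : Type*} [MetricSpace X] (x y z : X) : Real :=
  (dist x z + dist y z - dist x y) / 2

/-- `X` is `δ`-hyperbolic: four-point condition via Gromov products. -/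
def IsHyp (X : Type*) [MetricSpace X] (δ : Real) : Prop :=
  ∀ x y z t : X, gp x z t ≥ min (gp x y t) (gp y z t) - δ

/-- `γ` restricted to `I` is a `(1,l)`-quasi-geodesic parametrized by arclength. -/
def IsQG {X : Type*} [MetricSpace X] (l : Real) (I : Set Real) (γ : Real → X) : Prop :=
  ∀ s ∈ I, ∀ t ∈ I, dist (γ s) (γ t) ≤ |s - t| ∧ |s - t| ≤ dist (γ s) (γ t) + l

/-- `X` is a length space: any two points are joined by `(1,l)`-quasi-geodesics for all `l > 0`. -/
def IsLengthLike (X : Type*) [MetricSpace X] : Prop :=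
  ∀ x y : X, ∀ l > (0:Real), ∃ b ≥ (0:Real), ∃ γ : Real → X,
    γ 0 = x ∧ γ b = y ∧ IsQG l (Icc 0 b) γ

/-- `Y` is `α`-quasi-convex in `X`. -/
def QConvex {X : Type*} [MetricSpace X] (α : Real) (Y : Set X) : Prop :=
  ∀ x : X, ∀ y ∈ Y, ∀ y2 ∈ Y, infDist x Y ≤ gp y y2 x + α

theorem stmt8 {X : Type*} [MetricSpace X] {δ α η η' : Real} (hδ : 0 ≤ δ) (hα : 0 ≤ α)
    (hη : 0 ≤ η) (hη' : 0 ≤ η') (hX : IsHyp X δ) (hlen : IsLengthLike X)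
    {Y : Set X} (hY : QConvex α Y) (x x' p p' : X) (hp : p ∈ Y) (hp' : p' ∈ Y)
    (hproj : dist x p ≤ infDist x Y + η) (hproj' : dist x' p' ≤ infDist x' Y + η') :
    dist p p' ≤ max (dist x x' - dist x p - dist x' p' + 2 * (2 * α + η + η' + δ))
      (2 * α + η + η' + δ) := by

  have h1 : infDist x Y ≤ gp p p' x + α := hY x p hp p' hp'
  have h2 : infDist x' Y ≤ gp p' p x' + α := hY x' p' hp' p hp
  have h3 : infDist x Y ≤ dist x p' := infDist_le_dist_of_mem hp'
  have h4 : infDist x' Y ≤ dist x' p := infDist_le_dist_of_mem hp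
  have h5 : infDist x Y ≤ dist x p := infDist_le_dist_of_mem hp
  have h6 : infDist x' Y ≤ dist x' p' := infDist_le_dist_of_mem hp'
  -- A' : dist p p' ≤ dist x p' - dist x p + 2*(α+η)
  have hA : dist p p' ≤ dist x p' - dist x p + 2 * (α + η) := by
    simp only [gp] at h1
    have := dist_comm p x
    have := dist_comm p' x
    linarith
  have hB : dist p p' ≤ dist x' p - dist x' p' + 2 * (α + η') := by
    simp only [gp] at h2
    have := dist_comm p' x'
    have := dist_comm p x'
    have := dist_comm p' p
    linarith
  have h7 := hX x p p' x'
  rcases le_total (gp x p x') (gp p p' x') with h8 | h8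
  · rw [ge_iff_le, min_eq_left h8] at h7
    simp only [gp] at h7
    have := dist_comm p' x'
    have := dist_comm p x'
    have := dist_comm x' p'
    have := dist_comm x' p
    refine le_max_of_le_right ?_
    linarith
  · rw [ge_iff_le, min_eq_right h8] at h7
    simp only [gp] at h7
    have := dist_comm p' x'
    have := dist_comm p x'
    have := dist_comm x' p'
    have := dist_comm x' p
    refine le_max_of_le_left ?_
    linarith
end

section
/- Let X be a δ-hyperbolic length space, Y₁ an α₁-quasi-convex subset and Y₂ an α₂-quasi-convex subset of X. Then the intersection Z = Y₁^{+α₁+3δ} ∩ Y₂^{+α₂+3δ} of the thickened sets is 7δ-quasi-convex. -/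
open Metric Set

private lemma gp_def' {X : Type*} [MetricSpace X] (x y z : X) :
    gp x y z = (dist x z + dist y z - dist x y) / 2 := rfl

/-- Key construction: there is a point `m` "at parameter `t₀` from `z` towards `z'`"
which in addition is almost on a geodesic (in a controlled way even when `δ = 0`). -/
private lemma key_lemma {X : Type*} [MetricSpace X] {δ : ℝ} (hδ : 0 ≤ δ) (hX : IsHyp X δ)
    (hlen : IsLengthLike X) (z z' : X) {t₀ η : ℝ} (ht0 : 0 ≤ t₀)
    (ht1 : t₀ ≤ dist z z') (hη : 0 < η) :
    ∃ m : X, t₀ ≤ gp z' m z ∧ dist z m ≤ t₀ + min η δ := by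
  have hmin0 : 0 ≤ min η δ := le_min hη.le hδ
  rcases eq_or_lt_of_le ht0 with h0 | h0
  · refine ⟨z, ?_, ?_⟩
    · rw [gp_def']
      simp only [dist_self]
      linarith
    · rw [dist_self]; linarith
  rcases eq_or_lt_of_le hδ with hδ0 | hδpos
  · -- δ = 0 : use the infimum argument to get an exactly-placed point
    obtain ⟨b, hb, γ, hγ0, hγb, hqg⟩ := hlen z z' 1 one_pos
    have hlip : ∀ s ∈ Icc (0:ℝ) b, ∀ t ∈ Icc (0:ℝ) b, dist (γ s) (γ t) ≤ |s - t| :=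
      fun s hs t ht => (hqg s hs t ht).1
    have hγc : ContinuousOn γ (Icc 0 b) := by
      have : LipschitzOnWith 1 γ (Icc 0 b) := by
        apply LipschitzOnWith.of_dist_le_mul
        intro s hs t ht
        rw [NNReal.coe_one, one_mul, Real.dist_eq]
        exact hlip s hs t ht
      exact this.continuousOn
    have hwc : ContinuousOn (fun s => gp z' (γ s) z) (Icc 0 b) := by
      show ContinuousOn (fun s => (dist z' z + dist (γ s) z - dist z' (γ s)) / 2) (Icc 0 b)
      have hd1 : ContinuousOn (fun s => dist (γ s) z) (Icc 0 b) :=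
        (continuous_id.dist continuous_const).comp_continuousOn hγc
      have hd2 : ContinuousOn (fun s => dist z' (γ s)) (Icc 0 b) :=
        (continuous_const.dist continuous_id).comp_continuousOn hγc
      exact ((continuousOn_const.add hd1).sub hd2).div_const 2
    set S : Set ℝ := {s | s ∈ Icc (0:ℝ) b ∧ t₀ ≤ gp z' (γ s) z} with hSdef
    have hbS : b ∈ S := by
      refine ⟨⟨hb, le_refl b⟩, ?_⟩
      rw [hγb, gp_def']
      have h1 := dist_comm z' z
      simp only [dist_self]
      linarith
    have hSsub : S ⊆ Icc (0:ℝ) b := fun s hs => hs.1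
    have hbdd : BddBelow S := BddBelow.mono hSsub bddBelow_Icc
    have hclosed : IsClosed S := by
      have : S = Icc (0:ℝ) b ∩ (fun s => gp z' (γ s) z) ⁻¹' (Ici t₀) := by
        ext s
        simp [hSdef, Set.mem_preimage, Set.mem_Ici]
      rw [this]
      exact hwc.preimage_isClosed_of_isClosed isClosed_Icc isClosed_Ici
    have hsmem : sInf S ∈ S := hclosed.csInf_mem ⟨b, hbS⟩ hbdd
    obtain ⟨hsIcc, hws⟩ := hsmem
    refine ⟨γ (sInf S), hws, ?_⟩
    have hkey : dist z (γ (sInf S)) ≤ t₀ := by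
      by_contra hcon
      push_neg at hcon
      set ρ := dist z (γ (sInf S)) - t₀ with hρdef
      have hρ : 0 < ρ := by linarith
      have hspos : 0 < sInf S := by
        rcases eq_or_lt_of_le hsIcc.1 with h | h
        · exfalso
          rw [← h, hγ0, dist_self] at hρdef
          linarith
        · exact h
      set s := max 0 (sInf S - ρ/2) with hsdef
      have hs0 : 0 ≤ s := le_max_left _ _
      have hslt : s < sInf S := by
        apply max_lt hspos
        linarith
      have hsb : s ≤ b := le_trans hslt.le hsIcc.2
      have hsnot : s ∉ S := fun h => absurd (csInf_le hbdd h) (not_le.mpr hslt)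
      have hws_lt : gp z' (γ s) z < t₀ := by
        by_contra h
        push_neg at h
        exact hsnot ⟨⟨hs0, hsb⟩, h⟩
      have hdss : dist (γ (sInf S)) (γ s) ≤ ρ/2 := by
        have h1 := hlip (sInf S) hsIcc s ⟨hs0, hsb⟩
        have h2 : sInf S - s ≤ ρ/2 := by
          have h4 := le_max_right 0 (sInf S - ρ/2)
          rw [← hsdef] at h4
          linarith
        have h3 : 0 ≤ sInf S - s := by linarith
        rw [abs_of_nonneg h3] at h1
        linarith
      have hgp2 : t₀ ≤ gp (γ (sInf S)) (γ s) z := by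
        rw [gp_def']
        have htri : dist (γ (sInf S)) z ≤ dist (γ (sInf S)) (γ s) + dist (γ s) z :=
          dist_triangle _ _ _
        have hcm := dist_comm z (γ (sInf S))
        linarith
      have hyp := hX z' (γ (sInf S)) (γ s) z
      have hm : t₀ ≤ min (gp z' (γ (sInf S)) z) (gp (γ (sInf S)) (γ s) z) :=
        le_min hws hgp2
      rw [← hδ0] at hyp
      linarith
    linarith
  · -- δ > 0 : use the intermediate value theorem on a short quasi-geodesic
    have hl : (0:ℝ) < min η δ := lt_min hη hδpos
    obtain ⟨b, hb, γ, hγ0, hγb, hqg⟩ := hlen z z' (min η δ) hl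
    have hγc : ContinuousOn γ (Icc 0 b) := by
      have : LipschitzOnWith 1 γ (Icc 0 b) := by
        apply LipschitzOnWith.of_dist_le_mul
        intro s hs t ht
        rw [NNReal.coe_one, one_mul, Real.dist_eq]
        exact (hqg s hs t ht).1
      exact this.continuousOn
    have hwc : ContinuousOn (fun s => gp z' (γ s) z) (Icc 0 b) := by
      show ContinuousOn (fun s => (dist z' z + dist (γ s) z - dist z' (γ s)) / 2) (Icc 0 b)
      have hd1 : ContinuousOn (fun s => dist (γ s) z) (Icc 0 b) :=
        (continuous_id.dist continuous_const).comp_continuousOn hγc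
      have hd2 : ContinuousOn (fun s => dist z' (γ s)) (Icc 0 b) :=
        (continuous_const.dist continuous_id).comp_continuousOn hγc
      exact ((continuousOn_const.add hd1).sub hd2).div_const 2
    have hmem : t₀ ∈ Icc ((fun s => gp z' (γ s) z) 0) ((fun s => gp z' (γ s) z) b) := by
      simp only
      rw [hγ0, hγb]
      constructor
      · rw [gp_def']
        simp only [dist_self]
        linarith
      · rw [gp_def']
        have h1 := dist_comm z' z
        simp only [dist_self]
        linarith
    obtain ⟨s, hsIcc, hfs⟩ := intermediate_value_Icc hb hwc hmem
    simp only at hfs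
    refine ⟨γ s, le_of_eq hfs.symm, ?_⟩
    have h1 := (hqg 0 ⟨le_refl 0, hb⟩ s hsIcc).1
    have h2 := (hqg b ⟨hb, le_refl b⟩ s hsIcc).1
    have h3 := (hqg b ⟨hb, le_refl b⟩ 0 ⟨le_refl 0, hb⟩).2
    rw [hγ0] at h1
    rw [hγb] at h2 h3
    rw [hγ0] at h3
    have e1 : |0 - s| = s := by
      rw [abs_sub_comm, sub_zero, abs_of_nonneg hsIcc.1]
    have e2 : |b - s| = b - s := abs_of_nonneg (by linarith [hsIcc.2])
    have e3 : |b - 0| = b := by rw [sub_zero, abs_of_nonneg hb]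
    rw [e1] at h1
    rw [e2] at h2
    rw [e3] at h3
    rw [gp_def'] at hfs
    have c1 := dist_comm z' z
    have c2 := dist_comm z' (γ s)
    have c3 := dist_comm z (γ s)
    have hl2 : min η δ / 2 ≤ min η δ := by linarith
    linarith

/-- Membership lemma: the constructed point lies in the thickening of `Y`. -/
private lemma mem_lemma {X : Type*} [MetricSpace X] {δ α μ θ t₀ : ℝ} (hδ : 0 ≤ δ)
    (hα : 0 ≤ α) (hX : IsHyp X δ) {Y : Set X} (hY : QConvex α Y) {z z' m : X}
    (hz : infDist z Y ≤ α + 3*δ) (hz' : infDist z' Y ≤ α + 3*δ)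
    (hμ : 0 < μ) (hθ0 : 0 ≤ θ) (hθδ : θ ≤ δ) (hθμ : θ ≤ μ/8)
    (ht : 7*δ + μ ≤ t₀) (ht' : 7*δ + μ ≤ dist z z' - t₀)
    (hgp : gp z z' m ≤ θ) (hu1 : t₀ ≤ dist z m) (hu2 : dist z m ≤ t₀ + θ) :
    infDist m Y ≤ α + 3*δ := by
  rcases Y.eq_empty_or_nonempty with hY0 | hY0
  · rw [hY0, infDist_empty]; linarith
  obtain ⟨y, hy, hdy⟩ := (infDist_lt_iff hY0).1
    (lt_of_le_of_lt hz (by linarith : α + 3*δ < α + 3*δ + μ/4))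
  obtain ⟨y', hy', hdy'⟩ := (infDist_lt_iff hY0).1
    (lt_of_le_of_lt hz' (by linarith : α + 3*δ < α + 3*δ + μ/4))
  have hv : dist z z' - t₀ - θ ≤ dist z' m := by
    have htri := dist_triangle z m z'
    have hcm := dist_comm m z'
    linarith
  have h1 := hX z y' z' m
  have h2 := hX z y y' m
  rcases le_or_gt (gp y' z' m) (θ + δ) with hc | hc
  · -- case C : m is close to y'
    have hle : infDist m Y ≤ dist m y' := infDist_le_dist_of_mem hy'
    rw [gp_def'] at hc
    have c1 := dist_comm m y'
    have c2 := dist_comm z' y'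
    have c3 := dist_comm y' m
    linarith
  · have hzy' : gp z y' m ≤ θ + δ := by
      rcases min_cases (gp z y' m) (gp y' z' m) with ⟨hmeq, _⟩ | ⟨hmeq, _⟩
      · rw [hmeq] at h1; linarith
      · rw [hmeq] at h1; linarith
    have hmin2 : min (gp z y m) (gp y y' m) ≤ θ + 2*δ := by linarith
    rcases le_total (gp z y m) (gp y y' m) with hab | hab
    · -- case B : m is close to y
      have hB : gp z y m ≤ θ + 2*δ := by rw [min_eq_left hab] at hmin2; exact hmin2
      have hle : infDist m Y ≤ dist m y := infDist_le_dist_of_mem hy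
      rw [gp_def'] at hB
      have c1 := dist_comm m y
      have c2 := dist_comm y m
      linarith
    · -- case A : use quasi-convexity
      have hA : gp y y' m ≤ θ + 2*δ := by rw [min_eq_right hab] at hmin2; exact hmin2
      have := hY m y hy y' hy'
      linarith

theorem stmt10 {X : Type*} [MetricSpace X] {δ α₁ α₂ : Real} (hδ : 0 ≤ δ)
    (hα₁ : 0 ≤ α₁) (hα₂ : 0 ≤ α₂) (hX : IsHyp X δ) (hlen : IsLengthLike X)
    {Y₁ Y₂ : Set X} (hY₁ : QConvex α₁ Y₁) (hY₂ : QConvex α₂ Y₂) :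
    QConvex (7 * δ)
      ({x : X | infDist x Y₁ ≤ α₁ + 3 * δ} ∩ {x : X | infDist x Y₂ ≤ α₂ + 3 * δ}) := by
  intro x z hz z' hz'
  have hz1 : infDist z Y₁ ≤ α₁ + 3*δ := hz.1
  have hz2 : infDist z Y₂ ≤ α₂ + 3*δ := hz.2
  have hz'1 : infDist z' Y₁ ≤ α₁ + 3*δ := hz'.1
  have hz'2 : infDist z' Y₂ ≤ α₂ + 3*δ := hz'.2
  rcases le_or_gt (gp x z' z) (7*δ) with hcase1 | hcase1
  · have h1 : infDist x ({x : X | infDist x Y₁ ≤ α₁ + 3 * δ} ∩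
        {x : X | infDist x Y₂ ≤ α₂ + 3 * δ}) ≤ dist x z := infDist_le_dist_of_mem hz
    rw [gp_def'] at hcase1 ⊢
    have c1 := dist_comm x z
    have c2 := dist_comm z' z
    have c3 := dist_comm x z'
    linarith
  rcases le_or_gt (gp x z z') (7*δ) with hcase2 | hcase2
  · have h1 : infDist x ({x : X | infDist x Y₁ ≤ α₁ + 3 * δ} ∩
        {x : X | infDist x Y₂ ≤ α₂ + 3 * δ}) ≤ dist x z' := infDist_le_dist_of_mem hz'
    rw [gp_def'] at hcase2 ⊢
    have c1 := dist_comm x z'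
    have c2 := dist_comm z z'
    have c3 := dist_comm x z
    linarith
  -- main case
  have hsum : gp x z' z + gp x z z' = dist z z' := by
    rw [gp_def', gp_def']
    have c1 := dist_comm x z'
    have c2 := dist_comm z' z
    have c3 := dist_comm x z
    linarith
  set t₀ := gp x z' z with ht₀def
  have ht₀lt : t₀ < dist z z' - 7*δ := by linarith
  set μ := min (t₀ - 7*δ) (dist z z' - t₀ - 7*δ) with hμdef
  have hμ1 : μ ≤ t₀ - 7*δ := min_le_left _ _
  have hμ2 : μ ≤ dist z z' - t₀ - 7*δ := min_le_right _ _
  have hμpos : 0 < μ := lt_min (by linarith) (by linarith)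
  obtain ⟨m, hw, hu⟩ := key_lemma hδ hX hlen z z' (t₀ := t₀) (η := μ/8)
    (by linarith) (by linarith) (by linarith)
  set θ := min (μ/8) δ with hθdef
  have hθ0 : 0 ≤ θ := le_min (by linarith) hδ
  have hθδ : θ ≤ δ := min_le_right _ _
  have hθμ : θ ≤ μ/8 := min_le_left _ _
  have hu1 : t₀ ≤ dist z m := by
    rw [gp_def'] at hw
    have htri := dist_triangle z' m z
    have c1 := dist_comm m z
    linarith
  have hgpm : gp z z' m ≤ θ := by
    rw [gp_def'] at hw ⊢
    have c1 := dist_comm z' z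
    have c2 := dist_comm m z
    linarith
  have hm1 : infDist m Y₁ ≤ α₁ + 3*δ :=
    mem_lemma hδ hα₁ hX hY₁ hz1 hz'1 hμpos hθ0 hθδ hθμ (by linarith) (by linarith)
      hgpm hu1 hu
  have hm2 : infDist m Y₂ ≤ α₂ + 3*δ :=
    mem_lemma hδ hα₂ hX hY₂ hz2 hz'2 hμpos hθ0 hθδ hθμ (by linarith) (by linarith)
      hgpm hu1 hu
  have hmZ : m ∈ ({x : X | infDist x Y₁ ≤ α₁ + 3 * δ} ∩
      {x : X | infDist x Y₂ ≤ α₂ + 3 * δ}) := ⟨by simpa using hm1, by simpa using hm2⟩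
  have hle : infDist x ({x : X | infDist x Y₁ ≤ α₁ + 3 * δ} ∩
      {x : X | infDist x Y₂ ≤ α₂ + 3 * δ}) ≤ dist x m := infDist_le_dist_of_mem hmZ
  have hpx := hX x z' m z
  rw [← ht₀def] at hpx
  have hminle : t₀ - δ ≤ gp x m z := by
    have hm' : t₀ ≤ min t₀ (gp z' m z) := le_min (le_refl t₀) hw
    linarith
  have e1 : gp x m z = (dist x z + dist m z - dist x m) / 2 := gp_def' _ _ _
  have e2 : t₀ = (dist x z + dist z' z - dist x z') / 2 := by rw [ht₀def, gp_def']
  rw [gp_def']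
  have c1 := dist_comm z x
  have c2 := dist_comm z' x
  have c3 := dist_comm z' z
  have c4 := dist_comm m z
  linarith
end

section
/- Let X be a δ-hyperbolic length space and let Y, Z be respectively α- and β-quasi-convex subsets of X. For every A ≥ 0, diam(Y^{+A} ∩ Z^{+A}) ≤ diam(Y^{+α+3δ} ∩ Z^{+β+3δ}) + 2A + 4δ. -/
/-
If `x, x'` lie in `Y^{+A} ∩ Z^{+A}` and are more than `2A + 4δ` apart, take `m` at distance
about `A + 5δ/4` from `x` with `(x | x')_m ≤ δ/4`. Comparing with points `y, y' ∈ Y` near `x, x'`,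
two uses of the four-point condition show that `m` is near `y`, near `y'`, or has `(y | y')_m`
small, so `m` is within `α + 3δ` of `Y`, and likewise within `β + 3δ` of `Z`. Doing the same
from `x'` gives two points of the smaller intersection, each within `A + 2δ` of `x` resp. `x'`.
In a length space `m` is found on a `(1, δ/2)`-quasi-geodesic; when `δ = 0` an exact point of a
geodesic segment is needed, and it is the first point of a quasi-geodesic where `(· | x')_x`
reaches `A`.
-/

open Metric Set

section GromovProduct

variable {X : Type*} [MetricSpace X]

lemma gp_nonneg (x y z : X) : 0 ≤ gp x y z := by
  have := dist_triangle x z y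
  rw [dist_comm z y] at this
  unfold gp; linarith

lemma gp_comm (x y z : X) : gp x y z = gp y x z := by
  unfold gp; rw [dist_comm x y]; ring

lemma gp_left_self (x y : X) : gp x y x = 0 := by
  unfold gp; rw [dist_self, dist_comm y x]; ring

lemma gp_add_gp_eq_dist (x y m : X) : gp x y m + gp m y x = dist x m := by
  unfold gp; rw [dist_comm m x, dist_comm y x, dist_comm m y]; ring

lemma dist_sub_dist_le_gp (p q x : X) : dist q x - dist p q ≤ gp p q x := by
  have := dist_triangle q p x
  rw [dist_comm q p] at this
  unfold gp; linarith

lemma continuous_gp_left (z w : X) : Continuous fun p : X => gp p z w := by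
  unfold gp; fun_prop

lemma dist_le_of_gp_le {x y m : X} {A c ε : ℝ} (hgp : gp x y m ≤ c) (hxy : dist x y ≤ A + ε)
    (hxm : A + c ≤ dist x m) : dist m y ≤ c + ε := by
  rw [dist_comm]; unfold gp at hgp; linarith

lemma IsHyp.nonneg {δ : ℝ} (hX : IsHyp X δ) (x : X) : 0 ≤ δ := by
  have := hX x x x x
  rw [gp_left_self, min_self] at this
  linarith

end GromovProduct

section QuasiGeodesic

variable {X : Type*} [MetricSpace X] {l : ℝ} {I : Set ℝ} {γ : ℝ → X}

lemma IsQG.lipschitzOnWith (h : IsQG l I γ) : LipschitzOnWith 1 γ I :=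
  LipschitzOnWith.of_dist_le_mul fun s hs t ht => by
    simpa [Real.dist_eq] using (h s hs t ht).1

lemma IsQG.of_le (h : IsQG l I γ) {s t : ℝ} (hs : s ∈ I) (ht : t ∈ I) (hst : s ≤ t) :
    dist (γ s) (γ t) ≤ t - s ∧ t - s ≤ dist (γ s) (γ t) + l := by
  simpa [abs_sub_comm s t, abs_of_nonneg (sub_nonneg.2 hst)] using h s hs t ht

lemma exists_gp_le_of_isLengthLike (hlen : IsLengthLike X) {x x' : X} {l r : ℝ} (hl : 0 < l)
    (hr : 0 ≤ r) (hrd : r + l ≤ dist x x') :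
    ∃ m, gp x x' m ≤ l / 2 ∧ r ≤ dist x m ∧ dist x m ≤ r + l := by
  obtain ⟨b, hb, γ, hγ0, hγb, hγ⟩ := hlen x x' l hl
  have hbd := hγ.of_le (left_mem_Icc.2 hb) (right_mem_Icc.2 hb) hb
  rw [hγ0, hγb] at hbd
  have ht : r + l ∈ Icc 0 b := ⟨by linarith, by linarith⟩
  have hxm := hγ.of_le (left_mem_Icc.2 hb) ht (by linarith)
  have hmx' := hγ.of_le ht (right_mem_Icc.2 hb) ht.2
  rw [hγ0] at hxm
  rw [hγb] at hmx'
  refine ⟨γ (r + l), ?_, by linarith, by linarith⟩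
  unfold gp
  rw [dist_comm x' (γ (r + l))]
  linarith

/-- `m` is the first point of a quasi-geodesic from `x` to `x'` at which `(· | x')_x` reaches
`r`; with `δ = 0`, any gap `(x | x')_m > 0` would already be visible slightly earlier. -/
lemma exists_gp_eq_zero_of_isHyp_zero (hX : IsHyp X 0) (hlen : IsLengthLike X) {x x' : X}
    {r : ℝ} (hr : 0 < r) (hrd : r ≤ dist x x') :
    ∃ m, gp x x' m = 0 ∧ dist x m = r := by
  obtain ⟨b, hb, γ, hγ0, hγb, hγ⟩ := hlen x x' 1 one_pos
  set φ : ℝ → ℝ := fun t => gp (γ t) x' x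
  set T := Icc 0 b ∩ φ ⁻¹' Ici r
  have hφ0 : φ 0 = 0 := by simp only [φ, hγ0, gp_left_self]
  have hbT : b ∈ T := ⟨right_mem_Icc.2 hb, by
    simpa [φ, hγb, gp, dist_comm x' x] using hrd⟩
  have hφcont : ContinuousOn φ (Icc 0 b) :=
    (continuous_gp_left x' x).comp_continuousOn hγ.lipschitzOnWith.continuousOn
  have hT : IsClosed T := hφcont.preimage_isClosed_of_isClosed isClosed_Icc isClosed_Ici
  obtain ⟨⟨⟨ht₀0, ht₀b⟩, hrφ⟩, ht₀le⟩ :=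
    hT.isLeast_csInf ⟨b, hbT⟩ ⟨0, fun t ht => ht.1.1⟩
  set t₀ := sInf T
  set m := γ t₀
  have ht₀ : 0 < t₀ := lt_of_le_of_ne ht₀0 fun h => by
    simp only [mem_preimage, mem_Ici, ← h, hφ0] at hrφ; linarith
  have hbefore : ∀ s ∈ Ico 0 t₀, gp x x' m + (φ t₀ - r) < t₀ - s := by
    rintro s ⟨hs0, hst⟩
    have hφs : φ s < r := lt_of_not_ge fun h =>
      (ht₀le ⟨⟨hs0, by linarith⟩, h⟩).not_gt hst
    have hmin := hX (γ s) m x' x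
    have hnear : dist (γ s) m ≤ t₀ - s := (hγ.of_le ⟨hs0, by linarith⟩ ⟨ht₀0, ht₀b⟩ hst.le).1
    have hfar := dist_sub_dist_le_gp (γ s) m x
    have hsplit := gp_add_gp_eq_dist x x' m
    rw [dist_comm x m] at hsplit
    simp only [φ, mem_preimage, mem_Ici] at hφs hrφ ⊢
    rcases min_lt_iff.1 (show min (gp (γ s) m x) (gp m x' x) < r by linarith) with h | h <;>
      linarith
  have hzero : gp x x' m + (φ t₀ - r) ≤ 0 := by
    by_contra! hpos
    have := hbefore (max 0 (t₀ - (gp x x' m + (φ t₀ - r))))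
      ⟨le_max_left _ _, max_lt ht₀ (by linarith)⟩
    linarith [le_max_right 0 (t₀ - (gp x x' m + (φ t₀ - r)))]
  have hgp := gp_nonneg x x' m
  have hsplit := gp_add_gp_eq_dist x x' m
  simp only [φ, mem_preimage, mem_Ici] at hrφ hzero
  exact ⟨m, by linarith, by linarith⟩

lemma exists_gp_le_of_isHyp {δ : ℝ} (hX : IsHyp X δ) (hδ : 0 ≤ δ) (hlen : IsLengthLike X)
    {x x' : X} {r : ℝ} (hr : 0 ≤ r) (hrd : r + δ / 2 ≤ dist x x') :
    ∃ m, gp x x' m ≤ δ / 4 ∧ r ≤ dist x m ∧ dist x m ≤ r + δ / 2 := by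
  rcases hδ.eq_or_lt with rfl | hδ
  · rcases hr.eq_or_lt with rfl | hr
    · exact ⟨x, by simp [gp_left_self], by simp, by simp⟩
    · obtain ⟨m, hgp, hxm⟩ := exists_gp_eq_zero_of_isHyp_zero hX hlen hr (by linarith)
      exact ⟨m, by linarith, by linarith, by linarith⟩
  · obtain ⟨m, hgp, hm⟩ := exists_gp_le_of_isLengthLike hlen (half_pos hδ) hr hrd
    exact ⟨m, by linarith, hm⟩

end QuasiGeodesic

section QuasiConvex

variable {X : Type*} [MetricSpace X] {δ α A G : ℝ} {Y : Set X} {x x' m : X}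

/-- Two applications of the four-point condition at `m`: either `m` is near `y` or `y'`, or
`(y | y')_m` is small and quasi-convexity puts `m` near `Y`. -/
lemma QConvex.infDist_le_of_gp_le_of_mem (hX : IsHyp X δ) (hα : 0 ≤ α) (hY : QConvex α Y)
    {y y' : X} (hy : y ∈ Y) (hy' : y' ∈ Y) {ε : ℝ} (hε : 0 ≤ ε) (hxy : dist x y ≤ A + ε)
    (hxy' : dist x' y' ≤ A + ε) (hG : gp x x' m ≤ G) (hxm : A + G + δ ≤ dist x m)
    (hx'm : A + G + 2 * δ ≤ dist x' m) :
    infDist m Y ≤ α + 2 * δ + G + ε := by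
  have hδ := hX.nonneg x
  rcases min_le_iff.1 (show min (gp x y m) (gp y x' m) ≤ G + δ by linarith [hX x y x' m]) with
    hxy_m | hyx'_m
  · have := dist_le_of_gp_le hxy_m hxy (by linarith)
    linarith [infDist_le_dist_of_mem (x := m) hy]
  rcases min_le_iff.1 (show min (gp y y' m) (gp y' x' m) ≤ G + 2 * δ by
      linarith [hX y y' x' m]) with hyy'_m | hy'x'_m
  · linarith [hY m y hy y' hy']
  · rw [gp_comm] at hy'x'_m
    have := dist_le_of_gp_le hy'x'_m hxy' (by linarith)
    linarith [infDist_le_dist_of_mem (x := m) hy']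

lemma QConvex.infDist_le_of_gp_le (hX : IsHyp X δ) (hα : 0 ≤ α) (hY : QConvex α Y)
    (hxY : infDist x Y ≤ A) (hx'Y : infDist x' Y ≤ A) (hG : gp x x' m ≤ G)
    (hxm : A + G + δ ≤ dist x m) (hx'm : A + G + 2 * δ ≤ dist x' m) :
    infDist m Y ≤ α + 2 * δ + G := by
  rcases Y.eq_empty_or_nonempty with rfl | hYne
  · rw [infDist_empty]
    linarith [hX.nonneg x, gp_nonneg x x' m]
  refine le_of_forall_pos_le_add fun ε hε => ?_
  obtain ⟨y, hy, hxy⟩ := (infDist_lt_iff hYne).1 (show infDist x Y < A + ε by linarith)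
  obtain ⟨y', hy', hxy'⟩ := (infDist_lt_iff hYne).1 (show infDist x' Y < A + ε by linarith)
  exact hY.infDist_le_of_gp_le_of_mem hX hα hy hy' hε.le hxy.le hxy'.le hG hxm hx'm

end QuasiConvex

lemma ediam_le_ediam_add_of_exists {X : Type*} [MetricSpace X] {S C : Set X} {c : ℝ}
    (h : ∀ x ∈ S, ∀ x' ∈ S, c < dist x x' →
      ∃ m ∈ C, ∃ m' ∈ C, dist x m + dist x' m' ≤ c) :
    ediam S ≤ ediam C + ENNReal.ofReal c := by
  refine ediam_le fun x hx x' hx' => ?_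
  rw [edist_dist]
  rcases le_or_gt (dist x x') c with hle | hlt
  · exact (ENNReal.ofReal_le_ofReal hle).trans le_add_self
  obtain ⟨m, hm, m', hm', hmm'⟩ := h x hx x' hx' hlt
  have hxx' : dist x x' ≤ dist m m' + c := by
    linarith [dist_triangle4 x m m' x', dist_comm m' x']
  calc ENNReal.ofReal (dist x x') ≤ ENNReal.ofReal (dist m m') + ENNReal.ofReal c :=
        (ENNReal.ofReal_le_ofReal hxx').trans ENNReal.ofReal_add_le
    _ = edist m m' + ENNReal.ofReal c := by rw [edist_dist]
    _ ≤ ediam C + ENNReal.ofReal c := by gcongr; exact edist_le_ediam_of_mem hm hm'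

lemma exists_near_inter_thickenings {X : Type*} [MetricSpace X] {δ α β A : ℝ} (hα : 0 ≤ α)
    (hβ : 0 ≤ β) (hX : IsHyp X δ) (hlen : IsLengthLike X) {Y Z : Set X} (hY : QConvex α Y)
    (hZ : QConvex β Z) {x x' : X} (hxY : infDist x Y ≤ A) (hx'Y : infDist x' Y ≤ A)
    (hxZ : infDist x Z ≤ A) (hx'Z : infDist x' Z ≤ A) (hxx' : 2 * A + 4 * δ ≤ dist x x') :
    ∃ m, infDist m Y ≤ α + 3 * δ ∧ infDist m Z ≤ β + 3 * δ ∧ dist x m ≤ A + 2 * δ := by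
  have hA : 0 ≤ A := infDist_nonneg.trans hxY
  have hδ := hX.nonneg x
  obtain ⟨m, hG, hxm, hxm'⟩ :=
    exists_gp_le_of_isHyp hX hδ hlen (x := x) (x' := x') (r := A + 5 * δ / 4) (by linarith)
      (by linarith)
  have hx'm : A + δ / 4 + 2 * δ ≤ dist x' m := by
    linarith [dist_triangle x m x', dist_comm m x']
  have hmY := hY.infDist_le_of_gp_le hX hα hxY hx'Y hG (by linarith) hx'm
  have hmZ := hZ.infDist_le_of_gp_le hX hβ hxZ hx'Z hG (by linarith) hx'm
  exact ⟨m, by linarith, by linarith, by linarith⟩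

theorem stmt11_general {X : Type*} [MetricSpace X] {δ α β A : Real}
    (hα : 0 ≤ α) (hβ : 0 ≤ β) (hX : IsHyp X δ) (hlen : IsLengthLike X)
    {Y Z : Set X} (hY : QConvex α Y) (hZ : QConvex β Z) :
    EMetric.diam (({x : X | infDist x Y ≤ A} ∩ {x : X | infDist x Z ≤ A}) : Set X) ≤
      EMetric.diam (({x : X | infDist x Y ≤ α + 3 * δ} ∩
        {x : X | infDist x Z ≤ β + 3 * δ}) : Set X) + ENNReal.ofReal (2 * A + 4 * δ) := by
  refine ediam_le_ediam_add_of_exists fun x ⟨hxY, hxZ⟩ x' ⟨hx'Y, hx'Z⟩ hxx' => ?_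
  obtain ⟨m, hmY, hmZ, hxm⟩ :=
    exists_near_inter_thickenings hα hβ hX hlen hY hZ hxY hx'Y hxZ hx'Z hxx'.le
  obtain ⟨m', hm'Y, hm'Z, hx'm'⟩ :=
    exists_near_inter_thickenings hα hβ hX hlen hY hZ hx'Y hxY hx'Z hxZ
      (by rw [dist_comm]; exact hxx'.le)
  exact ⟨m, ⟨hmY, hmZ⟩, m', ⟨hm'Y, hm'Z⟩, by linarith⟩

theorem stmt11 {X : Type*} [MetricSpace X] {δ α β A : Real} (hδ : 0 ≤ δ)
    (hα : 0 ≤ α) (hβ : 0 ≤ β) (hA : 0 ≤ A) (hX : IsHyp X δ) (hlen : IsLengthLike X)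
    {Y Z : Set X} (hY : QConvex α Y) (hZ : QConvex β Z) :
    EMetric.diam (({x : X | infDist x Y ≤ A} ∩ {x : X | infDist x Z ≤ A}) : Set X) ≤
      EMetric.diam (({x : X | infDist x Y ≤ α + 3 * δ} ∩
        {x : X | infDist x Z ≤ β + 3 * δ}) : Set X) + ENNReal.ofReal (2 * A + 4 * δ) :=
  stmt11_general hα hβ hX hlen hY hZ
end

section
/- Let X be a δ-hyperbolic space, g an isometry of X, and x, x', y three points of X. Then d(gy, y) ≤ max{ d(gx, x), d(gx', x') } + 2(x|x')_y + 6δ. -/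
open Metric Set

theorem stmt14 {X : Type*} [MetricSpace X] {δ : Real} (hδ : 0 ≤ δ)
    (hX : IsHyp X δ) (g : X → X) (hg : Isometry g) (x x' y : X) :
    dist (g y) y ≤ max (dist (g x) x) (dist (g x') x') + 2 * gp x x' y + 6 * δ := by
  have h := hX (g y) (g x) y (g x')
  simp only [gp, ge_iff_le] at h ⊢
  rw [hg.dist_eq y x, hg.dist_eq y x', hg.dist_eq x x'] at h
  have t1 : dist y (g x') ≤ dist y x' + dist x' (g x') := dist_triangle _ _ _
  have t2 : dist (g x) y ≤ dist (g x) x + dist x y := dist_triangle _ _ _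
  have c1 : dist x' (g x') = dist (g x') x' := dist_comm _ _
  have c2 : dist x y = dist y x := dist_comm _ _
  have c3 : dist x' y = dist y x' := dist_comm _ _
  have m1 : dist (g x) x ≤ max (dist (g x) x) (dist (g x') x') := le_max_left _ _
  have m2 : dist (g x') x' ≤ max (dist (g x) x) (dist (g x') x') := le_max_right _ _
  rcases min_cases ((dist y x' + dist x x' - dist y x) / 2)
      ((dist x x' + dist y (g x') - dist (g x) y) / 2) with ⟨hmin, _⟩ | ⟨hmin, _⟩ <;>
    rw [hmin] at h <;> linarith
end

section
/- Let G be a group acting properly cocompactly by isometries on a proper geodesic δ-hyperbolic space X, and g an isometry of X with translation length [g] = inf_x d(gx,x). Define the axis A_g = {x ∈ X : d(gx,x) ≤ max{[g], 8δ}}. Then: (1) for every x ∈ X, d(gx, x) ≥ 2 d(x, A_g) + [g] − 14δ; (2) if d(gx,x) ≤ [g] + A then d(x, A_g) ≤ A/2 + 7δ; (3) A_g is 14δ-quasi-convex. -/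
open Metric Set

/-- `X` is a geodesic space. -/
def IsGeodesicSpace (X : Type*) [MetricSpace X] : Prop :=
  ∀ x y : X, ∃ γ : Real → X, γ 0 = x ∧ γ (dist x y) = y ∧
    ∀ s ∈ Icc 0 (dist x y), ∀ t ∈ Icc 0 (dist x y), dist (γ s) (γ t) = |s - t|

/-- The action of `G` on `X` is by isometries. -/
def IsometricAction (G X : Type*) [Group G] [MetricSpace X] [MulAction G X] : Prop :=
  ∀ g : G, Isometry (fun x : X => g • x)

/-- The action of `G` on `X` is proper. -/
def ProperAction (G X : Type*) [Group G] [MetricSpace X] [MulAction G X] : Prop :=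
  ∀ x : X, ∃ r > (0:Real),
    Set.Finite {g : G | ∃ y ∈ closedBall x r, g • y ∈ closedBall x r}

/-- The action of `G` on `X` is cocompact. -/
def CocompactAction (G X : Type*) [Group G] [MetricSpace X] [MulAction G X] : Prop :=
  ∃ K : Set X, IsCompact K ∧ ∀ x : X, ∃ g : G, g • x ∈ K

/-- The translation length of `g` on `X`. -/
noncomputable def translationLength {G : Type*} (X : Type*) [Group G] [MetricSpace X]
    [MulAction G X] (g : G) : Real :=
  ⨅ x : X, dist (g • x) x

namespace Stmt15Aux

theorem gp_eq {X : Type*} [MetricSpace X] (x y z : X) :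
    gp x y z = (dist x z + dist y z - dist x y) / 2 := rfl

theorem gp_nonneg {X : Type*} [MetricSpace X] (x y z : X) : 0 ≤ gp x y z := by
  have h : dist x y ≤ dist x z + dist y z := by
    calc dist x y ≤ dist x z + dist z y := dist_triangle x z y
    _ = dist x z + dist y z := by rw [dist_comm z y]
  rw [gp_eq]; linarith

/-- Tripod lemma: points at the same distance `s ≤ (y|z)_x` on two sides of a triangle
with corner `x` are `4δ`-close. -/
theorem tripod {X : Type*} [MetricSpace X] {δ : ℝ} (hδ : 0 ≤ δ) (hX : IsHyp X δ)
    {x y z m m' : X} {s : ℝ}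
    (h1 : dist x m = s) (h2 : dist m y = dist x y - s)
    (h3 : dist x m' = s) (h4 : dist m' z = dist x z - s)
    (h5 : s ≤ gp y z x) :
    dist m m' ≤ 4 * δ := by
  have e1 : gp m y x = s := by
    rw [gp_eq, dist_comm m x, h1, h2, dist_comm y x]; ring
  have e2 : gp z m' x = s := by
    rw [gp_eq, dist_comm m' x, h3, dist_comm z m', h4, dist_comm z x]; ring
  have A2 := hX y z m' x
  have hmin2 : s ≤ min (gp y z x) (gp z m' x) := le_min h5 (le_of_eq e2.symm)
  have e3 : s - δ ≤ gp y m' x := by linarith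
  have A1 := hX m y m' x
  have hmin1 : s - δ ≤ min (gp m y x) (gp y m' x) := le_min (by linarith) e3
  have e4 : s - 2 * δ ≤ gp m m' x := by linarith
  have e5 : gp m m' x = (dist x m + dist x m' - dist m m') / 2 := by
    rw [gp_eq, dist_comm m x, dist_comm m' x]
  rw [h1, h3] at e5
  linarith

variable {G X : Type*} [Group G] [MetricSpace X] [MulAction G X]

theorem dist_smul_smul (hiso : IsometricAction G X) (g : G) (a b : X) :
    dist (g • a) (g • b) = dist a b := (hiso g).dist_eq a b

/-- Points on a geodesic from `p` to `g • p` are displaced by at most `dist (g•p) p`. -/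
theorem seg_disp (hiso : IsometricAction G X) (g : G) {p w : X}
    (h : dist p w + dist w (g • p) = dist p (g • p)) :
    dist (g • w) w ≤ dist (g • p) p := by
  have h1 : dist (g • w) (g • p) = dist w p := dist_smul_smul hiso g w p
  calc dist (g • w) w ≤ dist (g • w) (g • p) + dist (g • p) w := dist_triangle _ _ _
    _ = dist w p + dist w (g • p) := by rw [h1, dist_comm (g • p) w]
    _ = dist p w + dist w (g • p) := by rw [dist_comm w p]
    _ = dist p (g • p) := h
    _ = dist (g • p) p := dist_comm _ _

/-- Points on a geodesic from `p` to `g⁻¹ • p` are displaced by at most `dist (g•p) p`. -/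
theorem seg_disp' (hiso : IsometricAction G X) (g : G) {p w : X}
    (h : dist p w + dist w (g⁻¹ • p) = dist p (g⁻¹ • p)) :
    dist (g • w) w ≤ dist (g • p) p := by
  have h1 : dist (g • w) p = dist w (g⁻¹ • p) := by
    have := dist_smul_smul hiso g w (g⁻¹ • p)
    rwa [smul_inv_smul] at this
  have h2 : dist p (g⁻¹ • p) = dist (g • p) p := by
    have h3 := dist_smul_smul hiso g p (g⁻¹ • p)
    rw [smul_inv_smul] at h3
    exact h3.symm
  calc dist (g • w) w ≤ dist (g • w) p + dist p w := dist_triangle _ _ _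
    _ = dist w (g⁻¹ • p) + dist p w := by rw [h1]
    _ = dist p (g⁻¹ • p) := by linarith
    _ = dist (g • p) p := h2

theorem disp_lip (hiso : IsometricAction G X) (g : G) (p u : X) :
    dist (g • u) u ≤ dist (g • p) p + 2 * dist p u := by
  have h1 : dist (g • u) (g • p) = dist u p := dist_smul_smul hiso g u p
  calc dist (g • u) u ≤ dist (g • u) (g • p) + dist (g • p) u := dist_triangle _ _ _
    _ ≤ dist u p + (dist (g • p) p + dist p u) := by
        gcongr
        · exact le_of_eq h1
        · exact dist_triangle _ _ _
    _ = dist (g • p) p + 2 * dist p u := by rw [dist_comm u p]; ring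

/-- If the whole geodesic from `p` to `z` lies in a set `S` of which `p` is a point
nearest to `x`, then the geodesic from `p` to `x` departs `p` almost orthogonally to `[p,z]`. -/
theorem perp {δ : ℝ} (hδ : 0 ≤ δ) (hX : IsHyp X δ) (hgeo : IsGeodesicSpace X)
    {S : Set X} {x p z : X}
    (hseg : ∀ w : X, dist p w + dist w z = dist p z → w ∈ S)
    (hnear : ∀ w ∈ S, dist x p ≤ dist x w) :
    gp x z p ≤ 2 * δ ∨ dist p z ≤ 2 * δ := by
  obtain ⟨γ, hγ0, hγd, hγiso⟩ := hgeo p z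
  set σ := gp x z p with hσ
  set s := min σ (dist p z) with hs
  have hσ0 : 0 ≤ σ := gp_nonneg _ _ _
  have hs0 : 0 ≤ s := le_min hσ0 dist_nonneg
  have hsmem : s ∈ Icc (0:ℝ) (dist p z) := ⟨hs0, min_le_right _ _⟩
  have h0mem : (0:ℝ) ∈ Icc (0:ℝ) (dist p z) := ⟨le_refl _, dist_nonneg⟩
  have hdmem : dist p z ∈ Icc (0:ℝ) (dist p z) := ⟨dist_nonneg, le_refl _⟩
  set w := γ s with hw
  have hpw : dist p w = s := by
    have h := hγiso 0 h0mem s hsmem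
    rw [hγ0] at h
    rw [hw, h, zero_sub, abs_neg, abs_of_nonneg hs0]
  have hwz : dist w z = dist p z - s := by
    have h := hγiso s hsmem (dist p z) hdmem
    rw [hγd] at h
    rw [hw, h, abs_of_nonpos (by linarith [min_le_right σ (dist p z)] : s - dist p z ≤ 0)]
    ring
  have hwS : w ∈ S := hseg w (by rw [hpw, hwz]; ring)
  have h1 : dist x p ≤ dist x w := hnear w hwS
  have h4 := hX x z w p
  have e2 : gp z w p = s := by
    rw [gp_eq, dist_comm z p, dist_comm w p, hpw, dist_comm z w, hwz]; ring
  have hmin : s ≤ min (gp x z p) (gp z w p) := le_min (min_le_left _ _) (le_of_eq e2.symm)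
  have e3 : s - δ ≤ gp x w p := by linarith
  have e4 : gp x w p = (dist x p + dist w p - dist x w) / 2 := by
    rw [gp_eq, dist_comm w p]
  have : s ≤ 2 * δ := by
    rw [e4, dist_comm w p, hpw] at e3
    linarith
  rw [hs] at this
  rcases min_le_iff.mp this with h | h
  · exact Or.inl h
  · exact Or.inr h

/-- Master inequality: displacement grows at rate 2 with distance to the quasi-axis. -/
theorem master {G X : Type*} [Group G] [MetricSpace X] [ProperSpace X] [MulAction G X]
    {δ : ℝ} (hδ : 0 < δ) (hX : IsHyp X δ) (hgeo : IsGeodesicSpace X)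
    (hiso : IsometricAction G X) (g : G) {L : ℝ}
    (hL8 : 8 * δ ≤ L)
    (hLf : ∀ z : X, L - 8 * δ ≤ dist (g • z) z)
    (hA : ({z : X | dist (g • z) z ≤ L}).Nonempty)
    (x : X) :
    2 * infDist x {z : X | dist (g • z) z ≤ L} + L - 10 * δ ≤ dist (g • x) x := by
  set A := {z : X | dist (g • z) z ≤ L} with hAdef
  have hAclosed : IsClosed A :=
    isClosed_le (Continuous.dist ((hiso g).continuous) continuous_id) continuous_const
  rcases eq_or_lt_of_le (infDist_nonneg (s := A) (x := x)) with h0 | hpos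
  · have := hLf x
    rw [← h0]
    linarith
  obtain ⟨p, hpA, hpd⟩ := hAclosed.exists_infDist_eq_dist hA x
  set lam := dist (g • p) p with hlamdef
  have hplam : lam ≤ L := hpA
  have hxp_pos : 0 < dist x p := by rw [← hpd]; exact hpos
  -- the nearest point has maximal allowed displacement
  have hlamL : L ≤ lam := by
    by_contra hc
    push_neg at hc
    obtain ⟨γ, hγ0, hγd, hγiso⟩ := hgeo p x
    set s := min (dist p x) ((L - lam) / 2) with hs
    have hs0 : 0 < s := lt_min (by rwa [dist_comm]) (by linarith)
    have hsd : s ≤ dist p x := min_le_left _ _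
    have hsmem : s ∈ Icc (0:ℝ) (dist p x) := ⟨hs0.le, hsd⟩
    have h0mem : (0:ℝ) ∈ Icc (0:ℝ) (dist p x) := ⟨le_refl _, dist_nonneg⟩
    have hdmem : dist p x ∈ Icc (0:ℝ) (dist p x) := ⟨dist_nonneg, le_refl _⟩
    set u := γ s with hu
    have hpu : dist p u = s := by
      have h := hγiso 0 h0mem s hsmem
      rw [hγ0] at h
      rw [hu, h, zero_sub, abs_neg, abs_of_nonneg hs0.le]
    have hux : dist u x = dist p x - s := by
      have h := hγiso s hsmem (dist p x) hdmem
      rw [hγd] at h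
      rw [hu, h, abs_of_nonpos (by linarith : s - dist p x ≤ 0)]
      ring
    have huA : u ∈ A := by
      have h1 : dist (g • u) u ≤ lam + 2 * s := by
        have := disp_lip hiso g p u
        rw [hpu] at this
        linarith
      have h2 : 2 * s ≤ L - lam := by
        have := min_le_right (dist p x) ((L - lam) / 2)
        rw [← hs] at this
        linarith
      exact le_trans h1 (by linarith)
    have := infDist_le_dist_of_mem (x := x) huA
    rw [hpd, dist_comm x u, hux, dist_comm p x] at this
    linarith
  have hlam : lam = L := le_antisymm hplam hlamL
  have hnear : ∀ w ∈ A, dist x p ≤ dist x w := by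
    intro w hw
    rw [← hpd]
    exact infDist_le_dist_of_mem hw
  -- orthogonality of [p,x] to the forward segment
  have hbeta : gp x (g • p) p ≤ 2 * δ := by
    rcases perp hδ.le hX hgeo (S := A) (x := x) (p := p) (z := g • p)
        (fun w hw => show dist (g • w) w ≤ L from le_trans (seg_disp hiso g hw) hplam)
        hnear with h | h
    · exact h
    · exfalso
      rw [dist_comm p (g • p), ← hlamdef, hlam] at h
      linarith
  -- orthogonality of [p,x] to the backward segment
  have hd1 : dist p (g⁻¹ • p) = lam := by
    have h3 := dist_smul_smul hiso g p (g⁻¹ • p)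
    rw [smul_inv_smul] at h3
    exact h3.symm
  have hbeta' : gp x (g⁻¹ • p) p ≤ 2 * δ := by
    rcases perp hδ.le hX hgeo (S := A) (x := x) (p := p) (z := g⁻¹ • p)
        (fun w hw => show dist (g • w) w ≤ L from le_trans (seg_disp' hiso g hw) hplam)
        hnear with h | h
    · exact h
    · exfalso
      rw [dist_comm p (g⁻¹ • p)] at h
      rw [dist_comm p (g⁻¹ • p)] at hd1
      rw [hd1, hlam] at h
      linarith
  -- distance from g•x to p
  have hgxp : dist (g • x) p = dist x (g⁻¹ • p) := by
    have := dist_smul_smul hiso g x (g⁻¹ • p)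
    rwa [smul_inv_smul] at this
  have hgxp_ge : dist x p + lam - 4 * δ ≤ dist (g • x) p := by
    have hid : dist x (g⁻¹ • p) = dist x p + dist (g⁻¹ • p) p - 2 * gp x (g⁻¹ • p) p := by
      rw [gp_eq]; ring
    rw [hgxp, hid, dist_comm (g⁻¹ • p) p, hd1]
    linarith
  -- Gromov product of g•x and g•p at p is large
  have htau : lam - 2 * δ ≤ gp (g • x) (g • p) p := by
    have hgg : dist (g • x) (g • p) = dist x p := dist_smul_smul hiso g x p
    rw [gp_eq, hgg, ← hlamdef]
    linarith
  -- hence the Gromov product of x and g•x at p is small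
  have h4 := hX x (g • x) (g • p) p
  have hmin : min (gp x (g • x) p) (gp (g • x) (g • p) p) ≤ 3 * δ := by linarith
  have hxgx : gp x (g • x) p ≤ 3 * δ := by
    rcases min_le_iff.mp hmin with h | h
    · exact h
    · exfalso
      rw [hlam] at htau
      linarith
  -- final computation
  have hid2 : dist x (g • x) = dist x p + dist (g • x) p - 2 * gp x (g • x) p := by
    rw [gp_eq]; ring
  have : 2 * dist x p + lam - 10 * δ ≤ dist x (g • x) := by
    rw [hid2]
    linarith
  rw [dist_comm (g • x) x, ← hpd] at *
  rw [hlam] at this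
  linarith

theorem geo_pt {X : Type*} [MetricSpace X] {a b : X} {γ : ℝ → X}
    (hγ0 : γ 0 = a) (hγd : γ (dist a b) = b)
    (hγiso : ∀ s ∈ Icc 0 (dist a b), ∀ t ∈ Icc 0 (dist a b), dist (γ s) (γ t) = |s - t|)
    {s : ℝ} (hs : s ∈ Icc (0:ℝ) (dist a b)) :
    dist a (γ s) = s ∧ dist (γ s) b = dist a b - s := by
  have h0mem : (0:ℝ) ∈ Icc (0:ℝ) (dist a b) := ⟨le_refl _, dist_nonneg⟩
  have hdmem : dist a b ∈ Icc (0:ℝ) (dist a b) := ⟨dist_nonneg, le_refl _⟩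
  constructor
  · have h := hγiso 0 h0mem s hs
    rw [hγ0] at h
    rw [h, zero_sub, abs_neg, abs_of_nonneg hs.1]
  · have h := hγiso s hs (dist a b) hdmem
    rw [hγd] at h
    rw [h, abs_of_nonpos (by linarith [hs.2] : s - dist a b ≤ 0)]
    ring

theorem tool_f {G X : Type*} [Group G] [MetricSpace X] [MulAction G X]
    {δ : ℝ} (hδ : 0 ≤ δ) (hX : IsHyp X δ) (hgeo : IsGeodesicSpace X)
    (hiso : IsometricAction G X) (g : G) {y y' m : X}
    (hm1 : dist y m + dist m y' = dist y y')
    (hcond : 2 * dist m y' + dist y (g • y') ≤ dist y y' + dist (g • y') y') :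
    dist (g • m) m ≤ dist (g • y') y' + 8 * δ := by
  obtain ⟨γ, hγ0, hγd, hγiso⟩ := hgeo y' (g • y')
  set b := dist m y' with hb
  have hcomm : dist y' (g • y') = dist (g • y') y' := dist_comm _ _
  have htr : dist y y' ≤ dist y (g • y') + dist (g • y') y' := dist_triangle _ _ _
  have hbmem : b ∈ Icc (0:ℝ) (dist y' (g • y')) := ⟨dist_nonneg, by linarith⟩
  obtain ⟨hw1, hw2⟩ := geo_pt hγ0 hγd hγiso hbmem
  set w := γ b with hwdef
  have htri : dist m w ≤ 4 * δ := by
    refine tripod hδ hX (x := y') (y := y) (z := g • y') (s := b) ?_ ?_ ?_ ?_ ?_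
    · exact dist_comm y' m ▸ rfl
    · rw [dist_comm m y, dist_comm y' y]; linarith
    · exact hw1
    · exact hw2
    · rw [gp_eq]; linarith
  have hfw : dist (g • w) w ≤ dist (g • y') y' := seg_disp hiso g (by linarith)
  have h4 : dist (g • m) m ≤ dist (g • m) (g • w) + dist (g • w) w + dist w m :=
    dist_triangle4 _ _ _ _
  have h5 : dist (g • m) (g • w) = dist m w := dist_smul_smul hiso g m w
  rw [h5, dist_comm w m] at h4
  linarith

theorem tool_c {G X : Type*} [Group G] [MetricSpace X] [MulAction G X]
    {δ : ℝ} (hδ : 0 ≤ δ) (hX : IsHyp X δ) (hgeo : IsGeodesicSpace X)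
    (hiso : IsometricAction G X) (g : G) {y y' m : X}
    (hm1 : dist y m + dist m y' = dist y y')
    (hc1 : dist (g • y) y - (dist y (g • y') - dist y y') ≤ 2 * dist y m)
    (hc2 : dist (g • y') y' - (dist y (g • y') - dist y y') ≤ 2 * dist m y')
    (hc3 : -(dist y (g • y') - dist y y') ≤ dist y m)
    (hc4 : -(dist y (g • y') - dist y y') ≤ dist m y') :
    dist (g • m) m ≤ |dist y (g • y') - dist y y'| + 8 * δ := by
  obtain ⟨γ, hγ0, hγd, hγiso⟩ := hgeo y (g • y')
  set D := dist y (g • y') with hD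
  set B := dist y y' with hB
  set b1 := dist y m with hb1
  set b2 := dist m y' with hb2
  have hmem1 : b1 ∈ Icc (0:ℝ) D := ⟨dist_nonneg, by linarith⟩
  have hmem2 : D - b2 ∈ Icc (0:ℝ) D := ⟨by linarith, by linarith [dist_nonneg (x := m) (y := y')]⟩
  obtain ⟨hm11, hm12⟩ := geo_pt hγ0 hγd hγiso hmem1
  obtain ⟨hn1, hn2⟩ := geo_pt hγ0 hγd hγiso hmem2
  set m1 := γ b1 with hm1def
  set n := γ (D - b2) with hndef
  have hm1n : dist m1 n = |B - D| := by
    have h := hγiso b1 hmem1 (D - b2) hmem2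
    rw [hm1def, hndef, h]
    congr 1
    linarith
  have htri1 : dist m m1 ≤ 4 * δ := by
    refine tripod hδ hX (x := y) (y := y') (z := g • y') (s := b1) rfl (by linarith) hm11 hm12 ?_
    rw [gp_eq, dist_comm y' y, dist_comm (g • y') y, dist_comm y' (g • y')]
    linarith
  have htri2 : dist n (g • m) ≤ 4 * δ := by
    have e1 : dist (g • y') n = b2 := by rw [dist_comm (g • y') n, hn2, ← hD]; ring
    have e2 : dist n y = dist (g • y') y - b2 := by
      rw [dist_comm n y, dist_comm (g • y') y, hn1]
    have e3 : dist (g • y') (g • m) = b2 := by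
      rw [dist_smul_smul hiso g y' m, dist_comm y' m]
    have e4 : dist (g • m) (g • y) = dist (g • y') (g • y) - b2 := by
      rw [dist_smul_smul hiso g m y, dist_smul_smul hiso g y' y, dist_comm m y, dist_comm y' y]
      linarith
    refine tripod hδ hX (x := g • y') (y := y) (z := g • y) (s := b2) e1 e2 e3 e4 ?_
    have e5 : dist (g • y) (g • y') = B := by rw [dist_smul_smul hiso g y y']
    have e6 : dist y (g • y') = D := rfl
    have e7 : dist y (g • y) = dist (g • y) y := dist_comm _ _
    rw [gp_eq, e5, e6, e7]
    linarith
  have h4 : dist (g • m) m ≤ dist (g • m) n + dist n m1 + dist m1 m := dist_triangle4 _ _ _ _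
  rw [dist_comm (g • m) n, dist_comm m1 m, dist_comm n m1] at h4
  have habs : |dist y (g • y') - dist y y'| = |B - D| := by rw [abs_sub_comm]
  rw [habs]
  linarith

theorem tool_h {G X : Type*} [Group G] [MetricSpace X] [MulAction G X]
    {δ : ℝ} (hδ : 0 ≤ δ) (hX : IsHyp X δ) (hgeo : IsGeodesicSpace X)
    (hiso : IsometricAction G X) (g : G) {y y' : X} {γ : ℝ → X}
    (hγ0 : γ 0 = y) (hγd : γ (dist y y') = y')
    (hγiso : ∀ s ∈ Icc 0 (dist y y'), ∀ t ∈ Icc 0 (dist y y'), dist (γ s) (γ t) = |s - t|)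
    {t : ℝ} (ht : t ∈ Icc (0:ℝ) (dist y y'))
    (hh1 : dist (g • y) y + (dist y' (g • y) - dist y y') ≤ 2 * t)
    (hh2 : 2 * t ≤ dist (g • y) y - (dist y (g • y') - dist y y'))
    (hh3 : t ≤ dist (g • y) y)
    (hh4 : dist (g • y) y - t ≤ dist y y') :
    dist (g • γ t) (γ t) ≤ |2 * t - dist (g • y) y| + 8 * δ := by
  set m := γ t with hmdef
  set F := dist (g • y) y with hF
  set B := dist y y' with hB
  obtain ⟨hym, hmy'⟩ := geo_pt hγ0 hγd hγiso ht
  obtain ⟨σ, hσ0, hσd, hσiso⟩ := hgeo y (g • y)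
  have hcF : dist y (g • y) = F := dist_comm _ _
  have hFmem : F - t ∈ Icc (0:ℝ) (dist y (g • y)) := by
    rw [hcF]; exact ⟨by linarith, by linarith [ht.1]⟩
  obtain ⟨hyw, hwg⟩ := geo_pt hσ0 hσd hσiso hFmem
  set w := σ (F - t) with hwdef
  have hFtmem : F - t ∈ Icc (0:ℝ) B := ⟨by linarith, hh4⟩
  obtain ⟨hym'', hm''y'⟩ := geo_pt hγ0 hγd hγiso hFtmem
  set m'' := γ (F - t) with hm''def
  have htri1 : dist w (g • m) ≤ 4 * δ := by
    have e1 : dist (g • y) w = t := by rw [dist_comm (g • y) w, hwg, hcF]; ring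
    have e2 : dist w y = dist (g • y) y - t := by rw [dist_comm w y, hyw]
    have e3 : dist (g • y) (g • m) = t := by rw [dist_smul_smul hiso g y m, hym]
    have e4 : dist (g • m) (g • y') = dist (g • y) (g • y') - t := by
      rw [dist_smul_smul hiso g m y', dist_smul_smul hiso g y y', hmy']
    refine tripod hδ hX (x := g • y) (y := y) (z := g • y') (s := t) e1 e2 e3 e4 ?_
    rw [gp_eq, dist_comm y (g • y), dist_comm (g • y') (g • y), dist_smul_smul hiso g y y']
    linarith
  have htri2 : dist m'' w ≤ 4 * δ := by
    refine tripod hδ hX (x := y) (y := y') (z := g • y) (s := F - t) hym'' (by linarith) hyw (by rw [hwg]) ?_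
    rw [gp_eq, dist_comm y' y, dist_comm (g • y) y]
    linarith
  have hmm'' : dist m m'' = |2 * t - F| := by
    have h := hγiso t ht (F - t) hFtmem
    rw [hmdef, hm''def, h]
    congr 1
    ring
  have h4 : dist (g • m) m ≤ dist (g • m) w + dist w m'' + dist m'' m := dist_triangle4 _ _ _ _
  rw [dist_comm (g • m) w, dist_comm w m'', dist_comm m'' m] at h4
  linarith

/-- Quasiconvexity of the displacement function (with constant `8δ`). -/
theorem dqc {G X : Type*} [Group G] [MetricSpace X] [MulAction G X]
    {δ : ℝ} (hδ : 0 ≤ δ) (hX : IsHyp X δ) (hgeo : IsGeodesicSpace X)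
    (hiso : IsometricAction G X) (g : G) {y y' : X} {γ : ℝ → X}
    (hγ0 : γ 0 = y) (hγd : γ (dist y y') = y')
    (hγiso : ∀ s ∈ Icc 0 (dist y y'), ∀ t ∈ Icc 0 (dist y y'), dist (γ s) (γ t) = |s - t|)
    {t : ℝ} (ht : t ∈ Icc (0:ℝ) (dist y y')) :
    dist (g • γ t) (γ t) ≤ max (dist (g • y) y) (dist (g • y') y') + 8 * δ := by
  obtain ⟨hym, hmy'⟩ := geo_pt hγ0 hγd hγiso ht
  set m := γ t with hmdef
  have hmaxl : dist (g • y) y ≤ max (dist (g • y) y) (dist (g • y') y') := le_max_left _ _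
  have hmaxr : dist (g • y') y' ≤ max (dist (g • y) y) (dist (g • y') y') := le_max_right _ _
  have hm1 : dist y m + dist m y' = dist y y' := by rw [hym, hmy']; ring
  have hcomm1 : dist y' m = dist m y' := dist_comm _ _
  have hcomm2 : dist m y = dist y m := dist_comm _ _
  have hcomm3 : dist y' y = dist y y' := dist_comm _ _
  have hgg : dist (g • y) (g • y') = dist y y' := dist_smul_smul hiso g y y'
  have hgg' : dist (g • y') (g • y) = dist y' y := dist_smul_smul hiso g y' y
  -- preliminary triangle bounds
  have hp1 : dist y y' ≤ dist y (g • y') + dist (g • y') y' := dist_triangle _ _ _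
  have hp2 : dist y y' ≤ dist (g • y) y + dist y (g • y') := by
    have h := dist_triangle (g • y) y (g • y')
    rw [hgg] at h
    linarith [h]
  have hp3 : dist y (g • y') ≤ dist y y' + dist (g • y') y' := by
    have h := dist_triangle y y' (g • y')
    have hc : dist y' (g • y') = dist (g • y') y' := dist_comm _ _
    linarith [h]
  have hp4 : dist y (g • y') ≤ dist (g • y) y + dist y y' := by
    have h := dist_triangle y (g • y) (g • y')
    have hc : dist y (g • y) = dist (g • y) y := dist_comm _ _
    linarith [h, hgg]
  have hq1 : dist y y' ≤ dist y' (g • y) + dist (g • y) y := by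
    have h := dist_triangle y' (g • y) y
    have hc : dist (g • y) y = dist (g • y) y := rfl
    linarith [h, hcomm3]
  have hq3 : dist y' (g • y) ≤ dist y y' + dist (g • y) y := by
    have h := dist_triangle y' y (g • y)
    have hc : dist y (g • y) = dist (g • y) y := dist_comm _ _
    linarith [h, hcomm3]
  have hq4 : dist y' (g • y) ≤ dist (g • y') y' + dist y y' := by
    have h := dist_triangle y' (g • y') (g • y)
    have hc : dist y' (g • y') = dist (g • y') y' := dist_comm _ _
    linarith [h, hgg', hcomm3]
  by_cases h1 : 2 * dist m y' + dist y (g • y') ≤ dist y y' + dist (g • y') y'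
  · exact (tool_f hδ hX hgeo hiso g hm1 h1).trans (by linarith)
  by_cases h2 : 2 * dist m y + dist y' (g • y) ≤ dist y' y + dist (g • y) y
  · have hm1' : dist y' m + dist m y = dist y' y := by
      rw [hcomm1, hcomm2, hcomm3]; linarith
    exact (tool_f hδ hX hgeo hiso g hm1' h2).trans (by linarith)
  push_neg at h1 h2
  by_cases h3 : dist (g • y) y - (dist y (g • y') - dist y y') ≤ 2 * dist y m
  · have hc2 : dist (g • y') y' - (dist y (g • y') - dist y y') ≤ 2 * dist m y' := by linarith
    have hc3 : -(dist y (g • y') - dist y y') ≤ dist y m := by linarith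
    have hc4 : -(dist y (g • y') - dist y y') ≤ dist m y' := by linarith
    have hres := tool_c hδ hX hgeo hiso g hm1 h3 hc2 hc3 hc4
    have habs : |dist y (g • y') - dist y y'| ≤ dist (g • y') y' :=
      abs_le.mpr ⟨by linarith, by linarith⟩
    exact hres.trans (by linarith)
  push_neg at h3
  by_cases h4 : 0 < dist y' (g • y) - dist y y'
  · -- symmetric tool_c with y and y' swapped
    have hm1' : dist y' m + dist m y = dist y' y := by
      rw [hcomm1, hcomm2, hcomm3]; linarith
    have hlt : dist y (g • y') - dist y y' < dist y' (g • y) - dist y y' := by linarith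
    have hc1 : dist (g • y') y' - (dist y' (g • y) - dist y' y) ≤ 2 * dist y' m := by
      rw [hcomm1, hcomm3]; linarith
    have hc2 : dist (g • y) y - (dist y' (g • y) - dist y' y) ≤ 2 * dist m y := by
      rw [hcomm2, hcomm3]; linarith
    have hc3 : -(dist y' (g • y) - dist y' y) ≤ dist y' m := by
      rw [hcomm1, hcomm3]; nlinarith [dist_nonneg (x := m) (y := y')]
    have hc4 : -(dist y' (g • y) - dist y' y) ≤ dist m y := by
      rw [hcomm2, hcomm3]; nlinarith [dist_nonneg (x := y) (y := m)]
    have hres := tool_c hδ hX hgeo hiso g hm1' hc1 hc2 hc3 hc4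
    have habs : |dist y' (g • y) - dist y' y| ≤ dist (g • y) y := by
      rw [hcomm3]
      exact abs_le.mpr ⟨by linarith, by linarith⟩
    exact hres.trans (by linarith)
  push_neg at h4
  -- final case: tool_h
  have hh1 : dist (g • y) y + (dist y' (g • y) - dist y y') ≤ 2 * t := by
    rw [hcomm2, hcomm3, hym] at h2
    linarith
  have hh2 : 2 * t ≤ dist (g • y) y - (dist y (g • y') - dist y y') := by
    rw [hym] at h3
    linarith
  have hh3 : t ≤ dist (g • y) y := by
    rw [hym] at h3
    linarith
  have hh4 : dist (g • y) y - t ≤ dist y y' := by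
    rw [hcomm2, hcomm3, hym] at h2
    have := ht.2
    linarith
  have hres := tool_h hδ hX hgeo hiso g hγ0 hγd hγiso ht hh1 hh2 hh3 hh4
  have habs : |2 * t - dist (g • y) y| ≤ dist (g • y') y' := by
    rw [hcomm2, hcomm3, hym] at h2
    rw [hym] at h3
    refine abs_le.mpr ⟨by linarith, by linarith⟩
  exact hres.trans (by linarith)

/-- A point on a geodesic `[y,y']` within `(y|y')_x + 2δ` of `x`. -/
theorem proj_pt {X : Type*} [MetricSpace X] {δ : ℝ} (hδ : 0 ≤ δ) (hX : IsHyp X δ)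
    (x : X) {y y' : X} {γ : ℝ → X}
    (hγ0 : γ 0 = y) (hγd : γ (dist y y') = y')
    (hγiso : ∀ s ∈ Icc 0 (dist y y'), ∀ t ∈ Icc 0 (dist y y'), dist (γ s) (γ t) = |s - t|) :
    ∃ t ∈ Icc (0:ℝ) (dist y y'), dist x (γ t) ≤ gp y y' x + 2 * δ := by
  set α := gp x y' y with hα
  have hα0 : 0 ≤ α := gp_nonneg _ _ _
  have hαB : α ≤ dist y y' := by
    rw [hα, gp_eq]
    have h1 := dist_triangle x y' y
    have h2 : dist y' y = dist y y' := dist_comm _ _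
    linarith
  refine ⟨α, ⟨hα0, hαB⟩, ?_⟩
  obtain ⟨hym, hmy'⟩ := geo_pt hγ0 hγd hγiso ⟨hα0, hαB⟩
  set m := γ α with hmdef
  have h4 := hX x y' m y
  have e2 : gp y' m y = α := by
    rw [gp_eq, dist_comm y' y, dist_comm m y, hym, dist_comm y' m, hmy']
    ring
  have hmin : α ≤ min (gp x y' y) (gp y' m y) := le_min (le_of_eq hα) (le_of_eq e2.symm)
  have e3 : α - δ ≤ gp x m y := by linarith
  have e4 : gp x m y = (dist x y + dist m y - dist x m) / 2 := by rw [gp_eq]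
  have e5 : gp y y' x = dist x y - α := by
    rw [gp_eq, hα, gp_eq, dist_comm y x, dist_comm y' x, dist_comm y' y]
    ring
  rw [e4, dist_comm m y, hym] at e3
  linarith

/-- Finiteness of almost-stabilizers for a proper action on a proper space. -/
theorem finite_stab {G X : Type*} [Group G] [MetricSpace X] [ProperSpace X] [MulAction G X]
    (hprop : ProperAction G X) (z₀ : X) (R : ℝ) :
    {h : G | dist (h • z₀) z₀ ≤ R}.Finite := by
  by_contra hfin
  have hinf : {h : G | dist (h • z₀) z₀ ≤ R}.Infinite := hfin
  set S := {h : G | dist (h • z₀) z₀ ≤ R} with hS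
  let e := hinf.natEmbedding
  set u : ℕ → X := fun n => (e n : S).1 • z₀ with hu
  have humem : ∀ n, u n ∈ closedBall z₀ R := fun n => by
    have h : dist ((e n : S).1 • z₀) z₀ ≤ R := (e n).2
    rw [mem_closedBall]
    exact h
  obtain ⟨w, -, φ, hφ, hlim⟩ := (isCompact_closedBall z₀ R).tendsto_subseq humem
  obtain ⟨r, hr, hF⟩ := hprop w
  have hball : ∀ᶠ n in Filter.atTop, (u ∘ φ) n ∈ closedBall w r :=
    hlim (closedBall_mem_nhds w hr)
  obtain ⟨N, hN⟩ := Filter.eventually_atTop.mp hball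
  set v : ℕ → G := fun n => ((e (φ (N + n)) : S).1 * ((e (φ N) : S).1)⁻¹) with hv
  have hvmem : ∀ n, v n ∈ {g : G | ∃ y ∈ closedBall w r, g • y ∈ closedBall w r} := by
    intro n
    refine ⟨u (φ N), hN N le_rfl, ?_⟩
    have h2 : v n • u (φ N) = u (φ (N + n)) := by
      rw [hv, hu]
      simp only [smul_smul]
      rw [inv_mul_cancel_right]
    rw [h2]
    exact hN (N + n) (Nat.le_add_right _ _)
  have hvinj : Function.Injective v := by
    intro a b hab
    have h1 : (e (φ (N + a)) : S).1 = (e (φ (N + b)) : S).1 := by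
      have := mul_right_cancel hab
      exact this
    have h2 : e (φ (N + a)) = e (φ (N + b)) := Subtype.ext h1
    have h3 := e.injective h2
    have h4 := hφ.injective h3
    omega
  exact (Set.infinite_of_injective_forall_mem hvinj hvmem) hF

/-- The translation length is attained for proper cocompact actions. -/
theorem attain {G X : Type*} [Group G] [MetricSpace X] [ProperSpace X] [Nonempty X]
    [MulAction G X] (hiso : IsometricAction G X) (hprop : ProperAction G X)
    (hcocompact : CocompactAction G X) (g : G) :
    ∃ y : X, dist (g • y) y ≤ translationLength X g := by
  obtain ⟨K, hK, hKc⟩ := hcocompact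
  set ℓ := translationLength X g with hℓ
  have hbdd : BddBelow (Set.range fun z : X => dist (g • z) z) :=
    ⟨0, by rintro _ ⟨z, rfl⟩; exact dist_nonneg⟩
  obtain ⟨h₀, hh₀⟩ := hKc (Classical.arbitrary X)
  have hKne : K.Nonempty := ⟨_, hh₀⟩
  obtain ⟨z₀, hz₀⟩ := hKne
  obtain ⟨R₀, hR₀⟩ := hK.isBounded.subset_closedBall z₀
  -- minimizing sequence
  have hseq : ∀ n : ℕ, ∃ z : X, dist (g • z) z < ℓ + 1 / (n + 1) := by
    intro n
    apply exists_lt_of_ciInf_lt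
    have heq : (⨅ i : X, dist (g • i) i) = ℓ := rfl
    rw [heq]
    have : (0:ℝ) < 1 / (n + 1) := by positivity
    linarith
  choose zs hzs using hseq
  choose hs hhs using fun n => hKc (zs n)
  set ys : ℕ → X := fun n => hs n • zs n with hys
  set gs : ℕ → G := fun n => hs n * g * (hs n)⁻¹ with hgs
  have hdisp : ∀ n, dist (gs n • ys n) (ys n) = dist (g • zs n) (zs n) := by
    intro n
    have h1 : gs n • ys n = hs n • (g • zs n) := by
      show (hs n * g * (hs n)⁻¹) • (hs n • zs n) = hs n • (g • zs n)
      rw [smul_smul, inv_mul_cancel_right, mul_smul]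
    rw [h1]
    show dist (hs n • (g • zs n)) (hs n • zs n) = _
    exact dist_smul_smul hiso (hs n) _ _
  have hone : ∀ n : ℕ, (0:ℝ) < 1 / (n + 1) := by intro n; positivity
  have honele : ∀ n : ℕ, (1:ℝ) / (n + 1) ≤ 1 := by
    intro n
    rw [div_le_one (by positivity)]
    have : (0:ℝ) ≤ n := Nat.cast_nonneg n
    linarith
  have hgs_in : ∀ n, dist (gs n • z₀) z₀ ≤ 2 * R₀ + ℓ + 1 := by
    intro n
    have h1 := dist_triangle4 (gs n • z₀) (gs n • ys n) (ys n) z₀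
    have h2 : dist (gs n • z₀) (gs n • ys n) = dist z₀ (ys n) := dist_smul_smul hiso (gs n) _ _
    have h3 : ys n ∈ closedBall z₀ R₀ := hR₀ (hhs n)
    rw [mem_closedBall] at h3
    have h4 : dist z₀ (ys n) = dist (ys n) z₀ := dist_comm _ _
    have h5 := (hdisp n).le.trans (hzs n).le
    have h6 := honele n
    linarith
  have hfin := finite_stab hprop z₀ (2 * R₀ + ℓ + 1)
  haveI := hfin.to_subtype
  set Ψ : ℕ → {h : G | dist (h • z₀) z₀ ≤ 2 * R₀ + ℓ + 1} := fun n => ⟨gs n, hgs_in n⟩ with hΨ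
  obtain ⟨b, hb⟩ := Finite.exists_infinite_fiber Ψ
  have hbinf : (Ψ ⁻¹' {b} : Set ℕ).Infinite := Set.infinite_coe_iff.mp hb
  -- continuous displacement of the limit conjugate attains a minimum on K
  have hcont : ContinuousOn (fun z : X => dist ((b : G) • z) z) K :=
    (Continuous.dist ((hiso (b : G)).continuous) continuous_id).continuousOn
  obtain ⟨y₁, hy₁K, hy₁min⟩ := hK.exists_isMinOn ⟨z₀, hz₀⟩ hcont
  have hle : dist ((b : G) • y₁) y₁ ≤ ℓ := by
    by_contra hc
    push_neg at hc
    set ε := dist ((b : G) • y₁) y₁ - ℓ with hε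
    have hε0 : 0 < ε := by rw [hε]; linarith
    obtain ⟨n, hnmem, hngt⟩ := hbinf.exists_gt ⌈1 / ε⌉₊
    have hΨn : (Ψ n : G) = b := by
      have : Ψ n = b := hnmem
      rw [this]
    have hgsb : gs n = (b : G) := hΨn
    have h1 : dist ((b : G) • ys n) (ys n) < ℓ + 1 / (n + 1) := by
      rw [← hgsb, hdisp n]
      exact hzs n
    have h2 : dist ((b : G) • y₁) y₁ ≤ dist ((b : G) • ys n) (ys n) :=
      isMinOn_iff.mp hy₁min (ys n) (hhs n)
    have h3 : (1:ℝ) / (n + 1) < ε := by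
      have hceil : (1 / ε : ℝ) ≤ ⌈1 / ε⌉₊ := Nat.le_ceil _
      have hcast : (⌈1 / ε⌉₊ : ℝ) < n := by exact_mod_cast hngt
      have hn1 : 1 / ε < n + 1 := by linarith
      rw [div_lt_iff₀ (by positivity)]
      calc (1:ℝ) = ε * (1 / ε) := by field_simp
      _ < ε * (n + 1) := by
          apply mul_lt_mul_of_pos_left _ hε0
          exact hn1
      _ = ε * (↑n + 1) := rfl
    rw [hε] at h3
    linarith
  obtain ⟨n₀, hn₀⟩ := hbinf.nonempty
  have hgsb : gs n₀ = (b : G) := by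
    have : Ψ n₀ = b := hn₀
    rw [← this]
  refine ⟨(hs n₀)⁻¹ • y₁, ?_⟩
  have hkey : dist (g • ((hs n₀)⁻¹ • y₁)) ((hs n₀)⁻¹ • y₁) = dist ((b : G) • y₁) y₁ := by
    have h1 := dist_smul_smul hiso (hs n₀) (g • (hs n₀)⁻¹ • y₁) ((hs n₀)⁻¹ • y₁)
    rw [← h1]
    congr 1
    · rw [smul_smul, smul_smul, ← hgsb]
    · rw [smul_inv_smul]
  rw [hkey]
  exact hle

end Stmt15Aux

theorem stmt15 {G X : Type*} [Group G] [MetricSpace X] [ProperSpace X] [Nonempty X]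
    [MulAction G X] {δ : Real} (hδ : 0 < δ)
    (hX : IsHyp X δ) (hgeo : IsGeodesicSpace X)
    (hiso : IsometricAction G X) (hprop : ProperAction G X)
    (hcocompact : CocompactAction G X) (g : G) :
    (∀ x : X, dist (g • x) x ≥
        2 * infDist x {y : X | dist (g • y) y ≤ max (translationLength X g) (8 * δ)} +
          translationLength X g - 14 * δ) ∧
    (∀ x : X, ∀ A : Real, dist (g • x) x ≤ translationLength X g + A →
        infDist x {y : X | dist (g • y) y ≤ max (translationLength X g) (8 * δ)} ≤
          A / 2 + 7 * δ) ∧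
    QConvex (14 * δ) {y : X | dist (g • y) y ≤ max (translationLength X g) (8 * δ)} := by
  classical
  have hδ0 : (0:ℝ) ≤ δ := hδ.le
  set ℓ := translationLength X g with hℓdef
  set L := max ℓ (8 * δ) with hLdef
  set A := {y : X | dist (g • y) y ≤ L} with hAdef
  have hbdd : BddBelow (Set.range fun z : X => dist (g • z) z) :=
    ⟨0, by rintro _ ⟨z, rfl⟩; exact dist_nonneg⟩
  have hℓle : ∀ z : X, ℓ ≤ dist (g • z) z := by
    intro z
    rw [hℓdef]
    exact ciInf_le hbdd z
  have hL8 : 8 * δ ≤ L := le_max_right _ _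
  have hℓL : ℓ ≤ L := le_max_left _ _
  have hLf : ∀ z : X, L - 8 * δ ≤ dist (g • z) z := by
    intro z
    have h1 := hℓle z
    have h2 : (0:ℝ) ≤ dist (g • z) z := dist_nonneg
    have h3 : L ≤ dist (g • z) z + 8 * δ := by
      rw [hLdef]
      exact max_le (by linarith) (by linarith)
    linarith
  obtain ⟨y₀, hy₀⟩ := Stmt15Aux.attain hiso hprop hcocompact g
  have hAne : A.Nonempty := ⟨y₀, by
    rw [hAdef, Set.mem_setOf_eq]
    exact le_trans (by rw [← hℓdef] at hy₀; exact hy₀) hℓL⟩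
  have hM : ∀ z : X, 2 * infDist z A + L - 10 * δ ≤ dist (g • z) z := fun z =>
    Stmt15Aux.master hδ hX hgeo hiso g hL8 hLf hAne z
  refine ⟨?_, ?_, ?_⟩
  · intro x
    have h1 := hM x
    show dist (g • x) x ≥ 2 * infDist x A + ℓ - 14 * δ
    linarith [hℓL, hδ]
  · intro x A' hle
    have h1 := hM x
    show infDist x A ≤ A' / 2 + 7 * δ
    linarith [hℓL, hδ]
  · show ∀ x : X, ∀ y ∈ A, ∀ y2 ∈ A, infDist x A ≤ gp y y2 x + 14 * δ
    intro x y hy y2 hy2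
    obtain ⟨γ, hγ0, hγd, hγiso⟩ := hgeo y y2
    obtain ⟨t, ht, hxm⟩ := Stmt15Aux.proj_pt hδ0 hX x hγ0 hγd hγiso
    have hdq := Stmt15Aux.dqc hδ0 hX hgeo hiso g hγ0 hγd hγiso ht
    have hyA : dist (g • y) y ≤ L := hy
    have hy2A : dist (g • y2) y2 ≤ L := hy2
    have hmax : max (dist (g • y) y) (dist (g • y2) y2) ≤ L := max_le hyA hy2A
    have hMm := hM (γ t)
    have hinf : infDist x A ≤ infDist (γ t) A + dist x (γ t) := infDist_le_infDist_add_dist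
    linarith [hδ]
end

section
/- Let G be a group acting by isometries on a proper geodesic δ-hyperbolic space X, and F a finite subgroup of G. Let x ∈ X, let g ∈ F maximize d(gx, x) over F, and let m be the midpoint of a geodesic [x, gx]. Then for every h ∈ F, d(hm, m) ≤ 10δ; that is, m lies in the set C_F = {y ∈ X : d(hy,y) ≤ 10δ for all h ∈ F}, and in particular C_F is non-empty. -/
open Metric Set

lemma key_mid {X : Type*} [MetricSpace X] {δ : Real} (hX : IsHyp X δ)
    (a b c t : X) (hab : dist a b = dist a c / 2) (hbc : dist b c = dist a c / 2) :
    dist b t ≤ max (dist a t) (dist c t) - dist a c / 2 + 2 * δ := by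
  have h4 := hX a b c t
  unfold gp at h4
  rcases le_total ((dist a t + dist b t - dist a b) / 2)
      ((dist b t + dist c t - dist b c) / 2) with hc | hc
  · rw [min_eq_left hc] at h4
    have := le_max_right (dist a t) (dist c t)
    linarith
  · rw [min_eq_right hc] at h4
    have := le_max_left (dist a t) (dist c t)
    linarith

theorem stmt16 {G X : Type*} [Group G] [MetricSpace X] [ProperSpace X]
    [MulAction G X] {δ : Real} (hδ : 0 < δ)
    (hX : IsHyp X δ) (hgeo : IsGeodesicSpace X) (hiso : IsometricAction G X)
    (F : Subgroup G) (hF : (F : Set G).Finite)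
    (x : X) (g : G) (hg : g ∈ F)
    (hmax : ∀ h ∈ F, dist (h • x) x ≤ dist (g • x) x)
    (m : X) (hm1 : dist x m = dist x (g • x) / 2)
    (hm2 : dist m (g • x) = dist x (g • x) / 2) :
    ∀ h ∈ F, dist (h • m) m ≤ 10 * δ := by
  intro h hh
  have isom : ∀ (k : G) (a b : X), dist (k • a) (k • b) = dist a b :=
    fun k a b => (hiso k).dist_eq a b
  have hcomm : dist (g • x) x = dist x (g • x) := dist_comm _ _
  -- displacement bounds
  have hhx : dist (h • x) x ≤ dist x (g • x) := by
    have := hmax h hh; linarith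
  have hhy : dist (h • g • x) x ≤ dist x (g • x) := by
    have h1 := hmax (h * g) (mul_mem hh hg)
    rw [mul_smul] at h1; linarith
  have hxy2 : dist (h • x) (g • x) ≤ dist x (g • x) := by
    have h1 := hmax (g⁻¹ * h) (mul_mem (inv_mem hg) hh)
    have e : dist (h • x) (g • x) = dist ((g⁻¹ * h) • x) x := by
      calc dist (h • x) (g • x) = dist (g • (g⁻¹ * h) • x) (g • x) := by
            rw [← mul_smul, ← mul_assoc, mul_inv_cancel, one_mul]
        _ = dist ((g⁻¹ * h) • x) x := isom g _ _
    rw [e]; linarith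
  have hyy2 : dist (h • g • x) (g • x) ≤ dist x (g • x) := by
    have h1 := hmax (g⁻¹ * h * g) (mul_mem (mul_mem (inv_mem hg) hh) hg)
    have e : dist (h • g • x) (g • x) = dist ((g⁻¹ * h * g) • x) x := by
      calc dist (h • g • x) (g • x) = dist (g • (g⁻¹ * h * g) • x) (g • x) := by
            rw [← mul_smul, ← mul_smul, ← mul_assoc, ← mul_assoc, mul_inv_cancel, one_mul]
        _ = dist ((g⁻¹ * h * g) • x) x := isom g _ _
    rw [e]; linarith
  -- h • m is the midpoint of h • x and h • (g • x)
  have hdL : dist (h • x) (h • g • x) = dist x (g • x) := isom h _ _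
  have hab : dist (h • x) (h • m) = dist (h • x) (h • g • x) / 2 := by
    rw [isom, isom, hm1]
  have hbc : dist (h • m) (h • g • x) = dist (h • x) (h • g • x) / 2 := by
    rw [isom, isom]
    calc dist m (g • x) = dist x (g • x) / 2 := hm2
      _ = dist x (g • x) / 2 := rfl
  -- Claim 1: dist (h • m) x ≤ L/2 + 2δ
  have c1 : dist (h • m) x ≤ dist x (g • x) / 2 + 2 * δ := by
    have hk := key_mid hX (h • x) (h • m) (h • g • x) x hab hbc
    rw [hdL] at hk
    have hmax' : max (dist (h • x) x) (dist (h • g • x) x) ≤ dist x (g • x) :=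
      max_le hhx hhy
    linarith
  -- Claim 2: dist (h • m) (g • x) ≤ L/2 + 2δ
  have c2 : dist (h • m) (g • x) ≤ dist x (g • x) / 2 + 2 * δ := by
    have hk := key_mid hX (h • x) (h • m) (h • g • x) (g • x) hab hbc
    rw [hdL] at hk
    have hmax' : max (dist (h • x) (g • x)) (dist (h • g • x) (g • x)) ≤ dist x (g • x) :=
      max_le hxy2 hyy2
    linarith
  -- conclude
  have c3 := key_mid hX x m (g • x) (h • m) hm1 hm2
  rw [dist_comm (h • m) x] at c1
  rw [dist_comm (h • m) (g • x)] at c2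
  have hmax' : max (dist x (h • m)) (dist (g • x) (h • m)) ≤ dist x (g • x) / 2 + 2 * δ :=
    max_le c1 c2
  rw [dist_comm (h • m) m]
  linarith
end

section
/- Let G act by isometries on a proper geodesic δ-hyperbolic space X and let F be a finite subgroup of G. The characteristic set C_F = {x ∈ X : d(gx,x) ≤ 10δ for all g ∈ F} is 8δ-quasi-convex. -/
open Metric Set

/-- Key estimate: the distance from an external point `x` to the point at parameter `t`
on a geodesic from `a` to `b` is bounded in terms of distances to the endpoints. -/
lemma geod_point_est {X : Type*} [MetricSpace X] {δ : Real} (hX : IsHyp X δ)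
    {a b : X} {γ : Real → X} (h0 : γ 0 = a) (hd : γ (dist a b) = b)
    (hγ : ∀ s ∈ Icc 0 (dist a b), ∀ t ∈ Icc 0 (dist a b), dist (γ s) (γ t) = |s - t|)
    {t : Real} (ht0 : 0 ≤ t) (ht1 : t ≤ dist a b) (x : X) :
    dist x (γ t) ≤ max (dist x a - t) (dist x b - (dist a b - t)) + 2 * δ := by
  have hT : (0:Real) ≤ dist a b := dist_nonneg
  have htmem : t ∈ Icc 0 (dist a b) := ⟨ht0, ht1⟩
  have h0mem : (0:Real) ∈ Icc 0 (dist a b) := ⟨le_refl _, hT⟩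
  have hTmem : dist a b ∈ Icc 0 (dist a b) := ⟨hT, le_refl _⟩
  have hap : dist a (γ t) = t := by
    have := hγ 0 h0mem t htmem
    rw [h0] at this
    rw [this, abs_of_nonpos (by linarith), neg_sub, sub_zero]
  have hbp : dist b (γ t) = dist a b - t := by
    have := hγ (dist a b) hTmem t htmem
    rw [hd] at this
    rw [this, abs_of_nonneg (by linarith)]
  have h4 := hX a x b (γ t)
  have habp : gp a b (γ t) = 0 := by
    simp only [gp, hap, hbp]
    ring
  rw [habp] at h4
  have hmin : min (gp a x (γ t)) (gp x b (γ t)) ≤ δ := by linarith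
  rcases min_le_iff.mp hmin with h | h
  · have h1 : dist x (γ t) ≤ dist x a - t + 2 * δ := by
      simp only [gp, hap] at h
      have hc1 : dist x (γ t) = dist x (γ t) := rfl
      have := dist_comm a x
      have := dist_comm x (γ t)
      linarith
    calc dist x (γ t) ≤ dist x a - t + 2 * δ := h1
      _ ≤ max (dist x a - t) (dist x b - (dist a b - t)) + 2 * δ := by
          have := le_max_left (dist x a - t) (dist x b - (dist a b - t)); linarith
  · have h1 : dist x (γ t) ≤ dist x b - (dist a b - t) + 2 * δ := by
      simp only [gp, hbp] at h
      have := dist_comm x (γ t)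
      linarith
    calc dist x (γ t) ≤ dist x b - (dist a b - t) + 2 * δ := h1
      _ ≤ max (dist x a - t) (dist x b - (dist a b - t)) + 2 * δ := by
          have := le_max_right (dist x a - t) (dist x b - (dist a b - t)); linarith

theorem stmt17 {G X : Type*} [Group G] [MetricSpace X] [ProperSpace X]
    [MulAction G X] {δ : Real} (hδ : 0 < δ)
    (hX : IsHyp X δ) (hgeo : IsGeodesicSpace X) (hiso : IsometricAction G X)
    (F : Subgroup G) (hF : (F : Set G).Finite) :
    QConvex (8 * δ) {x : X | ∀ g ∈ F, dist (g • x) x ≤ 10 * δ} := by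
  intro x y hy y' hy'
  simp only [Set.mem_setOf_eq] at hy hy'
  set Y : Set X := {x : X | ∀ g ∈ F, dist (g • x) x ≤ 10 * δ} with hYdef
  have hde : ∀ (g : G) (a b : X), dist (g • a) (g • b) = dist a b := by
    intro g a b
    exact (hiso g).dist_eq a b
  -- the geodesic from y to y'
  obtain ⟨γ, hγ0, hγd, hγ⟩ := hgeo y y'
  set T := dist y y' with hT
  set t := (dist x y + T - dist x y') / 2 with htdef
  have hxy' : dist x y' ≤ dist x y + T := by
    have := dist_triangle x y y'
    linarith
  have hxy : dist x y ≤ dist x y' + T := by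
    have h1 := dist_triangle x y' y
    have h2 := dist_comm y y'
    rw [hT]
    linarith [dist_comm y' y]
  have ht0 : 0 ≤ t := by rw [htdef]; linarith
  have ht1 : t ≤ T := by rw [htdef]; linarith
  set q := γ t with hq
  -- distance from x to q
  have hxq : dist x q ≤ gp y y' x + 2 * δ := by
    have h := geod_point_est hX hγ0 hγd hγ ht0 ht1 x
    rw [← hq, ← hT] at h
    have he1 : dist x y - t = gp y y' x := by
      simp only [gp, htdef, hT]
      rw [dist_comm y x, dist_comm y' x]
      ring
    have he2 : dist x y' - (T - t) = gp y y' x := by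
      simp only [gp, htdef, hT]
      rw [dist_comm y x, dist_comm y' x]
      ring
    rw [he1, he2, max_self] at h
    exact h
  have hqy : dist q y = t := by
    have := hγ t ⟨ht0, ht1⟩ 0 ⟨le_refl _, le_trans ht0 ht1⟩
    rw [hγ0, ← hq] at this
    rw [this, sub_zero, abs_of_nonneg ht0]
  have hqy' : dist q y' = T - t := by
    have := hγ t ⟨ht0, ht1⟩ T ⟨le_trans ht0 ht1, le_refl _⟩
    rw [hγd, ← hq] at this
    rw [this, abs_of_nonpos (by linarith), neg_sub]
  -- every element of F moves q by at most 12δ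
  have hqmove : ∀ g ∈ F, dist (g • q) q ≤ 12 * δ := by
    intro g hg
    have h := geod_point_est hX hγ0 hγd hγ ht0 ht1 (g • q)
    rw [← hq, ← hT] at h
    have h1 : dist (g • q) y ≤ t + 10 * δ := by
      calc dist (g • q) y ≤ dist (g • q) (g • y) + dist (g • y) y := dist_triangle _ _ _
        _ = dist q y + dist (g • y) y := by rw [hde]
        _ ≤ t + 10 * δ := by rw [hqy]; linarith [hy g hg]
    have h2 : dist (g • q) y' ≤ (T - t) + 10 * δ := by
      calc dist (g • q) y' ≤ dist (g • q) (g • y') + dist (g • y') y' := dist_triangle _ _ _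
        _ = dist q y' + dist (g • y') y' := by rw [hde]
        _ ≤ (T - t) + 10 * δ := by rw [hqy']; linarith [hy' g hg]
    have hm : max (dist (g • q) y - t) (dist (g • q) y' - (T - t)) ≤ 10 * δ :=
      max_le (by linarith) (by linarith)
    linarith
  -- choose g₀ maximizing the displacement of q
  have hFne : (F : Set G).Nonempty := ⟨1, F.one_mem⟩
  obtain ⟨g₀, hg₀F, hg₀max⟩ :=
    Set.exists_max_image (F : Set G) (fun g => dist (g • q) q) hF hFne
  -- the geodesic from q to g₀ • q and its midpoint m
  obtain ⟨σ, hσ0, hσd, hσ⟩ := hgeo q (g₀ • q)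
  set L := dist q (g₀ • q) with hL
  have hmax' : ∀ g ∈ F, dist (g • q) q ≤ L := by
    intro g hg
    calc dist (g • q) q ≤ dist (g₀ • q) q := hg₀max g hg
      _ = L := by rw [hL, dist_comm]
  have hL0 : 0 ≤ L := dist_nonneg
  have hL12 : L ≤ 12 * δ := by
    have := hqmove g₀ hg₀F
    rw [hL, dist_comm]
    exact this
  set m := σ (L / 2) with hm
  have hLmem0 : (0:Real) ≤ L / 2 := by linarith
  have hLmem1 : L / 2 ≤ L := by linarith
  have hqm : dist q m = L / 2 := by
    have := hσ 0 ⟨le_refl _, hL0⟩ (L / 2) ⟨hLmem0, hLmem1⟩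
    rw [hσ0, ← hm] at this
    rw [this, zero_sub, abs_neg, abs_of_nonneg hLmem0]
  -- every orbit point g • q (g ∈ F) is within L/2 + 2δ of m
  have horb : ∀ g ∈ F, dist (g • q) m ≤ L / 2 + 2 * δ := by
    intro g hg
    have h := geod_point_est hX hσ0 hσd hσ (t := L / 2) hLmem0 hLmem1 (g • q)
    rw [← hm] at h
    have h1 : dist (g • q) q ≤ L := hmax' g hg
    have h2 : dist (g • q) (g₀ • q) ≤ L := by
      have hh := hde g₀⁻¹ (g • q) (g₀ • q)
      rw [smul_smul, inv_smul_smul] at hh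
      rw [← hh]
      exact hmax' _ (F.mul_mem (F.inv_mem hg₀F) hg)
    have hmaxx : max (dist (g • q) q - L / 2) (dist (g • q) (g₀ • q) - (L - L / 2)) ≤ L / 2 :=
      max_le (by linarith) (by linarith)
    linarith
  -- m belongs to Y
  have hmY : m ∈ Y := by
    intro g hg
    have hLen : dist (g • q) ((g * g₀) • q) = L := by rw [mul_smul, hde, hL]
    have h0' : (fun s => g • σ s) 0 = g • q := by simp only []; rw [hσ0]
    have hend : (fun s => g • σ s) (dist (g • q) ((g * g₀) • q)) = (g * g₀) • q := by
      rw [hLen]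
      simp only []
      rw [hσd, mul_smul]
    have hγ' : ∀ s ∈ Icc 0 (dist (g • q) ((g * g₀) • q)),
        ∀ u ∈ Icc 0 (dist (g • q) ((g * g₀) • q)),
        dist ((fun s => g • σ s) s) ((fun s => g • σ s) u) = |s - u| := by
      intro s hs u hu
      rw [hLen] at hs hu
      simp only []
      rw [hde]
      exact hσ s hs u hu
    have h := geod_point_est hX h0' hend hγ' (t := L / 2) hLmem0
      (by rw [hLen]; exact hLmem1) m
    rw [hLen, ← hm] at h
    have h1 : dist m (g • q) ≤ L / 2 + 2 * δ := by
      rw [dist_comm]; exact horb g hg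
    have h2 : dist m ((g * g₀) • q) ≤ L / 2 + 2 * δ := by
      rw [dist_comm]; exact horb (g * g₀) (F.mul_mem hg hg₀F)
    have hmaxx : max (dist m (g • q) - L / 2) (dist m ((g * g₀) • q) - (L - L / 2)) ≤ 2 * δ :=
      max_le (by linarith) (by linarith)
    have : dist (g • m) m ≤ 4 * δ := by rw [dist_comm]; linarith
    linarith
  -- conclude
  have h1 : infDist x Y ≤ dist x m := infDist_le_dist_of_mem hmY
  have h2 : dist x m ≤ dist x q + dist q m := dist_triangle _ _ _
  rw [hqm] at h2
  linarith
end

section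
/- Let G act by isometries on a proper geodesic δ-hyperbolic space X, F a finite subgroup of G, and Y a non-empty F-invariant α-quasi-convex subset of X. Then the α-neighborhood of Y intersects C_F = {x ∈ X : d(gx,x) ≤ 10δ for all g ∈ F}. -/
open Metric Set

theorem stmt18 {G X : Type*} [Group G] [MetricSpace X] [ProperSpace X]
    [MulAction G X] {δ α : Real} (hδ : 0 < δ) (hα : 0 ≤ α)
    (hX : IsHyp X δ) (hgeo : IsGeodesicSpace X) (hiso : IsometricAction G X)
    (F : Subgroup G) (hF : (F : Set G).Finite)
    (Y : Set X) (hne : Y.Nonempty) (hinv : ∀ g ∈ F, ∀ y ∈ Y, g • y ∈ Y)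
    (hqc : QConvex α Y) :
    ∃ m : X, infDist m Y ≤ α ∧ ∀ g ∈ F, dist (g • m) m ≤ 10 * δ := by
  classical
  obtain ⟨y, hy⟩ := hne
  set ε : ℝ := δ/8 with hεdef
  have hεpos : 0 < ε := by positivity
  set Fs : Finset G := hF.toFinset with hFsdef
  have hmem : ∀ g : G, g ∈ Fs ↔ g ∈ F := fun g => by
    simp [hFsdef, Set.Finite.mem_toFinset]
  have hFsne : Fs.Nonempty := ⟨1, (hmem 1).2 F.one_mem⟩
  set r : X → ℝ := fun x => Fs.sup' hFsne (fun g => dist x (g • y)) with hrdef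
  have hr_le : ∀ (x : X) (c : ℝ), (∀ g ∈ Fs, dist x (g • y) ≤ c) → r x ≤ c :=
    fun x c h => Finset.sup'_le _ _ h
  have hle_r : ∀ (x : X) (g : G), g ∈ Fs → dist x (g • y) ≤ r x :=
    fun x g hg => Finset.le_sup' (fun g' => dist x (g' • y)) hg
  have hdist_smul : ∀ (g : G) (a b : X), dist (g • a) (g • b) = dist a b :=
    fun g a b => (hiso g).dist_eq a b
  have hr_inv_le : ∀ g ∈ F, ∀ x : X, r (g • x) ≤ r x := by
    intro g hg x
    apply hr_le
    intro g' hg'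
    have h1 : dist (g • x) (g' • y) = dist x ((g⁻¹ * g') • y) := by
      rw [← hdist_smul g x ((g⁻¹ * g') • y), mul_smul, smul_inv_smul]
    rw [h1]
    exact hle_r x _ ((hmem _).2 (F.mul_mem (F.inv_mem hg) ((hmem _).1 hg')))
  have hr_inv : ∀ g ∈ F, ∀ x : X, r (g • x) = r x := by
    intro g hg x
    refine le_antisymm (hr_inv_le g hg x) ?_
    have h2 := hr_inv_le g⁻¹ (F.inv_mem hg) (g • x)
    rwa [inv_smul_smul] at h2
  have hbdd : BddBelow (Set.range r) := by
    refine ⟨0, ?_⟩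
    rintro _ ⟨x, rfl⟩
    exact le_trans dist_nonneg (hle_r x 1 ((hmem 1).2 F.one_mem))
  set r0 : ℝ := sInf (Set.range r) with hr0def
  have hr0_le : ∀ x : X, r0 ≤ r x := fun x => csInf_le hbdd ⟨x, rfl⟩
  obtain ⟨_, ⟨x, rfl⟩, hx⟩ := Real.lt_sInf_add_pos (⟨r y, y, rfl⟩ : (Set.range r).Nonempty) hεpos
  rw [← hr0def] at hx
  -- hx : r x < r0 + ε
  -- Step B : F moves x by less than 4δ + 2ε
  have keyB : ∀ g ∈ F, dist (g • x) x < 4*δ + 2*ε := by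
    intro g hg
    set x' : X := g • x with hx'def
    obtain ⟨γ, hγ0, hγd, hγ⟩ := hgeo x x'
    set d : ℝ := dist x x' with hddef
    have hd0 : 0 ≤ d := dist_nonneg
    have hmemIcc : d/2 ∈ Icc (0:ℝ) d := ⟨by linarith, by linarith⟩
    set m : X := γ (d/2) with hmdef
    have hxm : dist x m = d/2 := by
      have := hγ 0 ⟨le_refl 0, hd0⟩ (d/2) hmemIcc
      rw [hγ0] at this
      rw [this]
      rw [abs_of_nonpos (by linarith)]
      ring
    have hmx' : dist m x' = d/2 := by
      have := hγ (d/2) hmemIcc d ⟨hd0, le_refl d⟩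
      rw [hγd] at this
      rw [this, abs_of_nonpos (by linarith)]
      ring
    have hgpm : gp x x' m = 0 := by
      have h1 : dist x' m = d/2 := by rw [dist_comm]; exact hmx'
      simp only [gp]
      rw [hxm, h1, ← hddef]
      ring
    have hrm : r m ≤ r x + 2*δ - d/2 := by
      apply hr_le
      intro g' hg'
      set a : X := g' • y with hadef
      have h4 := hX x a x' m
      rw [hgpm] at h4
      have hmin : min (gp x a m) (gp a x' m) ≤ δ := by linarith
      rcases min_le_iff.1 hmin with hcase | hcase
      · -- gp x a m ≤ δ : dist m a ≤ dist x a + 2δ - d/2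
        have : (dist x m + dist a m - dist x a)/2 ≤ δ := hcase
        have hxa : dist x a ≤ r x := hle_r x g' hg'
        rw [dist_comm m a]
        rw [hxm] at this
        linarith
      · have h2 : (dist a m + dist x' m - dist a x')/2 ≤ δ := hcase
        have hxa : dist x' a ≤ r x' := hle_r x' g' hg'
        have hrx' : r x' = r x := by rw [hx'def]; exact hr_inv g hg x
        rw [hrx'] at hxa
        have hc1 : dist x' m = d/2 := by rw [dist_comm]; exact hmx'
        have hc2 : dist a x' = dist x' a := dist_comm a x'
        have hc3 : dist m a = dist a m := dist_comm m a
        rw [hc1] at h2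
        linarith
    have := hr0_le m
    have hdlt : d < 4*δ + 2*ε := by linarith
    rw [dist_comm]
    exact hdlt
  -- Step A : some Gromov product of orbit points at x is small
  have keyA : ∃ g1 ∈ Fs, ∃ g2 ∈ Fs, gp (g1 • y) (g2 • y) x ≤ 2*δ + 2*ε := by
    by_contra hcon
    push_neg at hcon
    obtain ⟨g0, hg0, hg0eq⟩ := Finset.exists_mem_eq_sup' hFsne (fun g => dist x (g • y))
    set a0 : X := g0 • y with ha0def
    have hda0 : 2*δ + 2*ε < dist x a0 := by
      have h5 := hcon g0 hg0 g0 hg0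
      simp only [gp, dist_self] at h5
      rw [dist_comm a0 x] at h5
      linarith
    obtain ⟨γ, hγ0, hγd, hγ⟩ := hgeo x a0
    set c : ℝ := 2*δ + 2*ε with hcdef
    have hc0 : 0 ≤ c := by positivity
    have hcIcc : c ∈ Icc (0:ℝ) (dist x a0) := ⟨hc0, le_of_lt hda0⟩
    set m : X := γ c with hmdef
    have hxm : dist x m = c := by
      have := hγ 0 ⟨le_refl 0, dist_nonneg⟩ c hcIcc
      rw [hγ0] at this
      rw [this, abs_of_nonpos (by linarith)]
      ring
    have hma0 : dist m a0 = dist x a0 - c := by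
      have := hγ c hcIcc (dist x a0) ⟨dist_nonneg, le_refl _⟩
      rw [hγd] at this
      rw [this, abs_of_nonpos (by linarith)]
      ring
    have hgpma0 : gp m a0 x = c := by
      have h1 : dist m x = c := by rw [dist_comm]; exact hxm
      have h2 : dist a0 x = dist x a0 := dist_comm a0 x
      simp only [gp]
      rw [h1, h2, hma0]
      ring
    have hrm : r m ≤ r x - c + 2*δ := by
      apply hr_le
      intro g' hg'
      set b : X := g' • y with hbdef
      have h6 := hX m a0 b x
      rw [hgpma0] at h6
      have h7 : c < gp a0 b x := hcon g0 hg0 g' hg'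
      have h8 : gp m b x ≥ c - δ := by
        rcases min_le_iff.2 (Or.inl (le_refl c)) with _
        have hminc : min c (gp a0 b x) = c := min_eq_left (le_of_lt h7)
        rw [hminc] at h6
        linarith
      have h9 : (dist m x + dist b x - dist m b)/2 ≥ c - δ := h8
      have hxb : dist x b ≤ r x := hle_r x g' hg'
      have hc1 : dist m x = c := by rw [dist_comm]; exact hxm
      have hc2 : dist b x = dist x b := dist_comm b x
      rw [hc1, hc2] at h9
      linarith
    have := hr0_le m
    linarith
  obtain ⟨g1, hg1, g2, hg2, hgp12⟩ := keyA
  have hy1 : g1 • y ∈ Y := hinv g1 ((hmem g1).1 hg1) y hy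
  have hy2 : g2 • y ∈ Y := hinv g2 ((hmem g2).1 hg2) y hy
  have hinfx : infDist x Y ≤ α + 2*δ + 2*ε := by
    have := hqc x (g1 • y) hy1 (g2 • y) hy2
    linarith
  have hinfx' : infDist x Y < α + 2*δ + 3*ε := by linarith
  obtain ⟨p, hp, hxp⟩ := (Metric.infDist_lt_iff ⟨_, hy1⟩).1 hinfx'
  -- slide x toward p
  obtain ⟨γ, hγ0, hγd, hγ⟩ := hgeo x p
  set t : ℝ := min (2*δ + 3*ε) (dist x p) with htdef
  have ht0 : 0 ≤ t := le_min (by positivity) dist_nonneg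
  have htle : t ≤ dist x p := min_le_right _ _
  have htIcc : t ∈ Icc (0:ℝ) (dist x p) := ⟨ht0, htle⟩
  set m : X := γ t with hmdef
  have hxm : dist x m = t := by
    have := hγ 0 ⟨le_refl 0, dist_nonneg⟩ t htIcc
    rw [hγ0] at this
    rw [this, abs_of_nonpos (by linarith)]
    ring
  have hmp : dist m p = dist x p - t := by
    have := hγ t htIcc (dist x p) ⟨dist_nonneg, le_refl _⟩
    rw [hγd] at this
    rw [this, abs_of_nonpos (by linarith)]
    ring
  refine ⟨m, ?_, ?_⟩
  · have h10 : infDist m Y ≤ dist m p := Metric.infDist_le_dist_of_mem hp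
    rcases min_cases (2*δ + 3*ε) (dist x p) with ⟨heq, _⟩ | ⟨heq, _⟩
    · have ht : t = 2*δ + 3*ε := heq
      linarith
    · have ht : t = dist x p := heq
      linarith
  · intro g hg
    have hB := keyB g hg
    have htri : dist (g • m) m ≤ dist (g • m) (g • x) + dist (g • x) x + dist x m :=
      dist_triangle4 (g • m) (g • x) x m
    rw [hdist_smul g m x, dist_comm m x, hxm] at htri
    have htb : t ≤ 2*δ + 3*ε := min_le_left _ _
    have : dist (g • m) m ≤ 2*(2*δ+3*ε) + (4*δ + 2*ε) := by linarith
    have hεδ : ε = δ/8 := hεdef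
    linarith
end
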